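/- arXiv:1202.6413 — 8 statements merged into one kernel-verified Lean document; each statement's English description precedes it below -/
import Mathlib

section
/- Let $X$ be an extremally disconnected Hausdorff topological space (the closure of every open set is open), let $V, W \subseteq X$ be clopen subsets, and let $h : V \to W$ be a homeomorphism of $V$ onto $W$. Then the set of fixed points $F := \{x \in V : h(x) = x\}$ is a clopen subset of $X$. Moreover, there exist three pairwise disjoint clopen subsets $C_1, C_2, C_3$ of $X$ such that for each $i = 1,2,3$: $h(C_i \cap V) \cap C_i = \emptyset$, $C_i \cap F = \emptyset$, and $V = F \cup C_1 \cup C_2 \cup C_3$. -/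
open Set

/-- Frolík's theorem: if `X` is an extremally disconnected Hausdorff space, `V, W ⊆ X` are
clopen, and `e` is a homeomorphism of `V` onto `W` (encoded as a partial homeomorphism of `X`
with source `V` and target `W`), then the fixed-point set `F = {x ∈ V | e x = x}` is clopen,
and there are three pairwise disjoint clopen sets `C₁, C₂, C₃` with
`e(Cᵢ ∩ V) ∩ Cᵢ = ∅`, `Cᵢ ∩ F = ∅` and `V = F ∪ C₁ ∪ C₂ ∪ C₃`. -/
theorem frolik_fixed_points {X : Type*} [TopologicalSpace X] [T2Space X]
    [ExtremallyDisconnected X] (V W : Set X) (hV : IsClopen V) (hW : IsClopen W)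
    (e : PartialHomeomorph X X) (heS : e.source = V) (heT : e.target = W) :
    IsClopen {x ∈ V | e x = x} ∧
    ∃ C₁ C₂ C₃ : Set X,
      IsClopen C₁ ∧ IsClopen C₂ ∧ IsClopen C₃ ∧
      Disjoint C₁ C₂ ∧ Disjoint C₁ C₃ ∧ Disjoint C₂ C₃ ∧
      (∀ Ci ∈ ({C₁, C₂, C₃} : Set (Set X)),
        e '' (Ci ∩ V) ∩ Ci = ∅ ∧ Ci ∩ {x ∈ V | e x = x} = ∅) ∧
      V = {x ∈ V | e x = x} ∪ C₁ ∪ C₂ ∪ C₃ := by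
  classical
  set F : Set X := {x ∈ V | e x = x} with hF
  have heCont : ContinuousOn e V := heS ▸ e.continuousOn
  have heSymmCont : ContinuousOn e.symm W := heT ▸ e.symm.continuousOn
  have hmemV : ∀ x ∈ V, e x ∈ W := fun x hx => by
    rw [← heT]; exact e.map_source (heS ▸ hx)
  have hleft : ∀ x ∈ V, e.symm (e x) = x := fun x hx => e.left_inv (heS ▸ hx)
  have hright : ∀ y ∈ W, e (e.symm y) = y := fun y hy => e.right_inv (heT ▸ hy)
  -- Zorn: maximal open U ⊆ V with e '' U disjoint from U
  set S : Set (Set X) := {U | IsOpen U ∧ U ⊆ V ∧ Disjoint (e '' U) U} with hSdef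
  obtain ⟨U, hUmax⟩ : ∃ m, Maximal (· ∈ S) m := by
    apply zorn_subset
    intro c hcS hchain
    refine ⟨⋃₀ c, ⟨isOpen_sUnion fun s hs => (hcS hs).1,
      sUnion_subset fun s hs => (hcS hs).2.1, ?_⟩, fun s hs => subset_sUnion_of_mem hs⟩
    rw [disjoint_left]
    rintro y ⟨x, hx, rfl⟩ hy
    obtain ⟨s, hs, hxs⟩ := hx
    obtain ⟨t, ht, hyt⟩ := hy
    rcases hchain.total hs ht with hst | hts
    · exact (hcS ht).2.2.le_bot ⟨⟨x, hst hxs, rfl⟩, hyt⟩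
    · exact (hcS hs).2.2.le_bot ⟨⟨x, hxs, rfl⟩, hts hyt⟩
  obtain ⟨⟨hUopen, hUV, hUdisj⟩, hUm⟩ := hUmax
  set A : Set X := closure U with hA
  have hAopen : IsOpen A := ExtremallyDisconnected.open_closure U hUopen
  have hAclopen : IsClopen A := ⟨isClosed_closure, hAopen⟩
  have hAV : A ⊆ V := hV.isClosed.closure_subset_iff.mpr hUV
  -- e '' U is open (it equals W ∩ e.symm ⁻¹' U)
  have himgU : e '' U = W ∩ e.symm ⁻¹' U := by
    ext y
    constructor
    · rintro ⟨x, hx, rfl⟩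
      exact ⟨hmemV x (hUV hx), by rw [mem_preimage, hleft x (hUV hx)]; exact hx⟩
    · rintro ⟨hyW, hy⟩
      exact ⟨e.symm y, hy, hright y hyW⟩
  have himgUopen : IsOpen (e '' U) := by
    rw [himgU]; exact heSymmCont.isOpen_inter_preimage hW.isOpen hUopen
  -- key: e '' A is disjoint from A
  have hkey : Disjoint (e '' A) A := by
    have h1 : e '' A ⊆ closure (e '' U) :=
      ContinuousOn.image_closure (heCont.mono (hA ▸ hAV))
    have h2 : Disjoint (closure (e '' U)) (closure U) :=
      ExtremallyDisconnected.disjoint_closure_of_disjoint_isOpen hUdisj himgUopen hUopen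
    exact h2.mono h1 subset_rfl
  -- the auxiliary sets
  set B₂ : Set X := W ∩ e.symm ⁻¹' A with hB₂
  set B₃ : Set X := V ∩ e ⁻¹' A with hB₃
  have hB₂clopen : IsClopen B₂ :=
    ⟨heSymmCont.preimage_isClosed_of_isClosed hW.isClosed hAclopen.isClosed,
     heSymmCont.isOpen_inter_preimage hW.isOpen hAopen⟩
  have hB₃clopen : IsClopen B₃ :=
    ⟨heCont.preimage_isClosed_of_isClosed hV.isClosed hAclopen.isClosed,
     heCont.isOpen_inter_preimage hV.isOpen hAopen⟩
  have hmemB₂ : ∀ x ∈ V, (e x ∈ B₂ ↔ x ∈ A) := by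
    intro x hx
    simp only [hB₂, mem_inter_iff, mem_preimage, hleft x hx]
    exact and_iff_right (hmemV x hx)
  set C₁ : Set X := A with hC₁
  set C₂ : Set X := (B₂ ∩ V) \ A with hC₂
  set C₃ : Set X := (B₃ ∩ V) \ (A ∪ B₂) with hC₃
  have hC₁clopen : IsClopen C₁ := hAclopen
  have hC₂clopen : IsClopen C₂ := ((hB₂clopen.inter hV).diff hAclopen)
  have hC₃clopen : IsClopen C₃ := ((hB₃clopen.inter hV).diff (hAclopen.union hB₂clopen))
  -- decomposition
  have hdecomp : V = F ∪ C₁ ∪ C₂ ∪ C₃ := by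
    apply Subset.antisymm
    · intro x hx
      by_contra hxn
      simp only [mem_union, not_or] at hxn
      obtain ⟨⟨⟨hxF, hxC₁⟩, hxC₂⟩, hxC₃⟩ := hxn
      have hxA : x ∉ A := hxC₁
      have hxB₂ : x ∉ B₂ := fun h => hxC₂ ⟨⟨h, hx⟩, hxA⟩
      have hxB₃ : x ∉ B₃ := fun h => hxC₃ ⟨⟨h, hx⟩, by simp [hxA, hxB₂]⟩
      have hne : e x ≠ x := fun h => hxF ⟨hx, h⟩
      obtain ⟨H, G, hHopen, hGopen, hexH, hxG, hHG⟩ := t2_separation hne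
      set G' : Set X := (G ∩ (V ∩ e ⁻¹' H)) \ (A ∪ B₂ ∪ B₃) with hG'
      have hG'open : IsOpen G' :=
        (hGopen.inter (heCont.isOpen_inter_preimage hV.isOpen hHopen)).sdiff
          ((hAclopen.union hB₂clopen).union hB₃clopen).isClosed
      have hxG' : x ∈ G' := ⟨⟨hxG, hx, hexH⟩, by simp [hxA, hxB₂, hxB₃]⟩
      have hG'V : G' ⊆ V := fun y hy => hy.1.2.1
      -- U ∪ G' is still in S
      have hUG' : U ∪ G' ∈ S := by
        refine ⟨hUopen.union hG'open, union_subset hUV hG'V, ?_⟩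
        rw [image_union, disjoint_union_left, disjoint_union_right, disjoint_union_right]
        refine ⟨⟨hUdisj, ?_⟩, ?_, ?_⟩
        · -- e '' U vs G'
          rw [disjoint_right]
          rintro y hy hyi
          have : y ∈ B₂ := by
            obtain ⟨a, ha, rfl⟩ := hyi
            exact (hmemB₂ a (hUV ha)).mpr (subset_closure ha)
          exact hy.2 (Or.inl (Or.inr this))
        · -- e '' G' vs U
          rw [disjoint_left]
          rintro y ⟨a, ha, rfl⟩ hyU
          have haB₃ : a ∈ B₃ := ⟨hG'V ha, subset_closure hyU⟩
          exact ha.2 (Or.inr haB₃)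
        · -- e '' G' vs G'
          rw [disjoint_left]
          rintro y ⟨a, ha, rfl⟩ hyG'
          exact hHG.le_bot ⟨ha.1.2.2, hyG'.1.1⟩
      have : U ∪ G' = U := (hUm hUG' subset_union_left).antisymm subset_union_left
      have hxU : x ∈ U := this ▸ Or.inr hxG'
      exact hxA (subset_closure hxU)
    · refine union_subset (union_subset (union_subset ?_ ?_) ?_) ?_
      · exact fun x hx => hx.1
      · exact hAV
      · exact fun x hx => hx.1.2
      · exact fun x hx => hx.1.2
  -- the moving conditions
  have hcond : ∀ Ci ∈ ({C₁, C₂, C₃} : Set (Set X)),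
      e '' (Ci ∩ V) ∩ Ci = ∅ ∧ Ci ∩ F = ∅ := by
    have main : ∀ Ci ∈ ({C₁, C₂, C₃} : Set (Set X)), e '' (Ci ∩ V) ∩ Ci = ∅ := by
      rintro Ci (rfl | rfl | rfl)
      · -- C₁ = A
        rw [inter_eq_self_of_subset_left hAV]
        exact disjoint_iff_inter_eq_empty.mp hkey
      · -- C₂
        rw [eq_empty_iff_forall_notMem]
        rintro y ⟨⟨a, ⟨haC₂, haV⟩, rfl⟩, hyC₂⟩
        exact haC₂.2 ((hmemB₂ a haV).mp hyC₂.1.1)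
      · -- C₃
        rw [eq_empty_iff_forall_notMem]
        rintro y ⟨⟨a, ⟨haC₃, haV⟩, rfl⟩, hyC₃⟩
        exact hyC₃.2 (Or.inl haC₃.1.1.2)
    intro Ci hCi
    refine ⟨main Ci hCi, ?_⟩
    rw [eq_empty_iff_forall_notMem]
    rintro x ⟨hxC, hxV, hxe⟩
    have : x ∈ e '' (Ci ∩ V) ∩ Ci := ⟨⟨x, ⟨hxC, hxV⟩, hxe⟩, hxC⟩
    rw [main Ci hCi] at this
    exact this
  -- F is clopen
  have hFeq : F = V ∩ (C₁ ∪ C₂ ∪ C₃)ᶜ := by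
    ext x
    constructor
    · intro hx
      refine ⟨hx.1, ?_⟩
      intro hmem
      simp only [mem_union] at hmem
      rcases hmem with (h | h) | h
      · exact eq_empty_iff_forall_notMem.mp (hcond C₁ (by simp)).2 x ⟨h, hx⟩
      · exact eq_empty_iff_forall_notMem.mp (hcond C₂ (by simp)).2 x ⟨h, hx⟩
      · exact eq_empty_iff_forall_notMem.mp (hcond C₃ (by simp)).2 x ⟨h, hx⟩
    · rintro ⟨hxV, hxc⟩
      have hxd : x ∈ F ∪ C₁ ∪ C₂ ∪ C₃ := by rw [← hdecomp]; exact hxV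
      simp only [mem_union] at hxd
      rcases hxd with ((h | h) | h) | h
      · exact h
      · exact absurd (Or.inl (Or.inl h)) hxc
      · exact absurd (Or.inl (Or.inr h)) hxc
      · exact absurd (Or.inr h) hxc
  have hFclopen : IsClopen F := by
    rw [hFeq]
    exact hV.inter ((hC₁clopen.union hC₂clopen).union hC₃clopen).compl
  refine ⟨hFclopen, C₁, C₂, C₃, hC₁clopen, hC₂clopen, hC₃clopen, ?_, ?_, ?_, hcond, hdecomp⟩
  · rw [disjoint_right]; exact fun y hy => fun h => hy.2 h
  · rw [disjoint_right]; exact fun y hy => fun h => hy.2 (Or.inl h)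
  · rw [disjoint_right]; exact fun y hy => fun h => hy.2 (Or.inr h.1.1)
end

section
/- Let $(C,D)$ be an inclusion, let $v \in N(C,D)$ be a normalizer, and let $\sigma$ be a character of $D$ such that $\sigma(v^*v) \neq 0$ and $\beta_v(\sigma) \neq \sigma$, i.e., there exists $d \in D$ with $\sigma(v^* d v) \neq \sigma(v^*v)\,\sigma(d)$. Then every state $\rho$ on $C$ whose restriction to $D$ equals $\sigma$ satisfies $\rho(v) = 0$. -/
/-!
A state `ρ` that agrees with a character `σ` on `D` has `D` in its multiplicative domain: for
`d ∈ D` the element `d - σ d • 1` is null for the semi-inner product `⟨a, b⟩ = ρ (a⋆ b)`, so by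
Cauchy–Schwarz `ρ (z d) = ρ z σ d` and `ρ (d z) = σ d ρ z`. Computing `ρ (v v⋆ d v)` in both
ways gives `ρ (v⋆ d v) ρ v = σ (v⋆ v) σ d ρ v`, so `ρ v ≠ 0` would force `β_v(σ) = σ`.
-/

open scoped ComplexOrder

/-- `v` is a normalizer of the subset `S`:  `v* S v ⊆ S` and `v S v* ⊆ S`. -/
def IsNormalizer {C : Type*} [Mul C] [Star C] (S : Set C) (v : C) : Prop :=
  ∀ d ∈ S, star v * d * v ∈ S ∧ v * d * star v ∈ S

open ComplexConjugate

section Normalizer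

variable {A : Type*} [Semiring A] [StarRing A] [Algebra ℂ A] [StarModule ℂ A]
  {S : StarSubalgebra ℂ A} {v : A}

theorem IsNormalizer.star_mul_self_mem (hv : IsNormalizer (S : Set A) v) : star v * v ∈ S := by
  simpa using (hv 1 (one_mem S)).1

theorem IsNormalizer.mul_star_self_mem (hv : IsNormalizer (S : Set A) v) : v * star v ∈ S := by
  simpa using (hv 1 (one_mem S)).2

end Normalizer

section PositiveFunctional

variable {A : Type*} [Ring A] [StarRing A] [Algebra ℂ A] [StarModule ℂ A]

def IsPositiveFunctional (ρ : A →ₗ[ℂ] ℂ) : Prop :=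
  ∀ x : A, 0 ≤ ρ (star x * x)

namespace IsPositiveFunctional

variable {ρ : A →ₗ[ℂ] ℂ} (hρ : IsPositiveFunctional ρ)
include hρ

-- Polarization: the diagonal values at `a + b` and `a + I • b` are real.
theorem conj_apply_star_mul (a b : A) : conj (ρ (star a * b)) = ρ (star b * a) := by
  have him (x : A) : (ρ (star x * x)).im = 0 := (Complex.nonneg_iff.mp (hρ x)).2.symm
  have hsum := him (a + b)
  have hisum := him (a + Complex.I • b)
  have ha := him a
  have hb := him b
  simp only [star_add, star_smul, add_mul, mul_add, smul_mul_assoc, mul_smul_comm, map_add,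
    map_smul, smul_eq_mul, Complex.star_def, Complex.conj_I, Complex.add_im, Complex.mul_im,
    Complex.neg_re, Complex.neg_im, Complex.I_re, Complex.I_im, Complex.mul_re] at hsum hisum
  apply Complex.ext <;> simp only [Complex.conj_re, Complex.conj_im] <;> linarith

theorem apply_star_eq_conj (x : A) : ρ (star x) = conj (ρ x) := by
  simpa using (hρ.conj_apply_star_mul 1 x).symm

abbrev innerCore : PreInnerProductSpace.Core ℂ A where
  inner a b := ρ (star a * b)
  conj_inner_symm a b := hρ.conj_apply_star_mul b a
  re_inner_nonneg x := (Complex.nonneg_iff.mp (hρ x)).1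
  add_left a b c := by simp only [star_add, add_mul, map_add]
  smul_left a b c := by simp only [star_smul, smul_mul_assoc, map_smul, smul_eq_mul,
    Complex.star_def]

theorem norm_apply_star_mul_sq_le (x y : A) :
    ‖ρ (star x * y)‖ ^ 2 ≤ (ρ (star x * x)).re * (ρ (star y * y)).re := by
  let := hρ.innerCore
  calc ‖ρ (star x * y)‖ ^ 2 = ‖ρ (star x * y)‖ * ‖ρ (star y * x)‖ := by
        rw [sq, ← hρ.conj_apply_star_mul, Complex.norm_conj]
    _ ≤ _ := InnerProductSpace.Core.inner_mul_inner_self_le (𝕜 := ℂ) x y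

theorem apply_mul_eq_zero_of_apply_star_mul_self_eq_zero {y : A} (hy : ρ (star y * y) = 0)
    (x : A) : ρ (x * y) = 0 := by
  have := hρ.norm_apply_star_mul_sq_le (star x) y
  rw [hy, Complex.zero_re, mul_zero] at this
  simpa using this

theorem apply_mul_eq_mul_of_apply_star_mul_self (hρ1 : ρ 1 = 1) {d : A}
    (hd : ρ (star d * d) = ρ (star d) * ρ d) (z : A) : ρ (z * d) = ρ z * ρ d := by
  have hnull : ρ (star (d - ρ d • 1) * (d - ρ d • 1)) = 0 := by
    simp only [star_sub, star_smul, star_one, sub_mul, mul_sub, smul_mul_assoc, mul_smul_comm,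
      one_mul, mul_one, map_sub, map_smul, smul_eq_mul, hρ1, hd]
    ring
  have := hρ.apply_mul_eq_zero_of_apply_star_mul_self_eq_zero hnull z
  rw [mul_sub, mul_smul_comm, mul_one, map_sub, map_smul, smul_eq_mul] at this
  linear_combination this

theorem apply_mul_eq_mul_of_apply_mul_star_self (hρ1 : ρ 1 = 1) {d : A}
    (hd : ρ (d * star d) = ρ d * ρ (star d)) (z : A) : ρ (d * z) = ρ d * ρ z := by
  have hd' : ρ (star (star d) * star d) = ρ (star (star d)) * ρ (star d) := by
    rwa [star_star]
  calc ρ (d * z) = conj (ρ (star z * star d)) := by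
        rw [← hρ.apply_star_eq_conj, star_mul, star_star, star_star]
    _ = conj (ρ (star z) * ρ (star d)) := by
        rw [hρ.apply_mul_eq_mul_of_apply_star_mul_self hρ1 hd']
    _ = ρ d * ρ z := by
        rw [map_mul, hρ.apply_star_eq_conj, hρ.apply_star_eq_conj, Complex.conj_conj,
          Complex.conj_conj, mul_comm]

theorem apply_star_mul_mul_eq (hρ1 : ρ 1 = 1) {S : StarSubalgebra ℂ A}
    (hS : ∀ a ∈ S, ∀ b ∈ S, ρ (a * b) = ρ a * ρ b) {v : A} (hv : IsNormalizer (S : Set A) v)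
    (hv0 : ρ v ≠ 0) {d : A} (hd : d ∈ S) :
    ρ (star v * d * v) = ρ (star v * v) * ρ d := by
  have mul_mem_eq (e : A) (he : e ∈ S) (z : A) : ρ (z * e) = ρ z * ρ e :=
    hρ.apply_mul_eq_mul_of_apply_star_mul_self hρ1 (hS _ (star_mem he) _ he) z
  have mem_mul_eq (e : A) (he : e ∈ S) (z : A) : ρ (e * z) = ρ e * ρ z :=
    hρ.apply_mul_eq_mul_of_apply_mul_star_self hρ1 (hS _ he _ (star_mem he)) z
  -- both sides are `ρ (v v⋆ v) / ρ v`
  have hsym : ρ (v * star v) = ρ (star v * v) := by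
    refine mul_right_cancel₀ hv0 ?_
    rw [← mem_mul_eq _ hv.mul_star_self_mem, mul_assoc, mul_mem_eq _ hv.star_mul_self_mem,
      mul_comm]
  refine mul_right_cancel₀ hv0 ?_
  calc ρ (star v * d * v) * ρ v = ρ (v * star v * d * v) := by
        rw [mul_comm, mul_assoc (v * star v), mul_assoc v, ← mul_assoc (star v),
          mul_mem_eq _ (hv d hd).1]
    _ = ρ (star v * v) * ρ d * ρ v := by
        rw [mem_mul_eq _ (S.mul_mem hv.mul_star_self_mem hd), hS _ hv.mul_star_self_mem _ hd,
          hsym]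

end IsPositiveFunctional

end PositiveFunctional

theorem state_vanishes_on_moved_normalizer_general
    {C : Type*} [NormedRing C] [StarRing C] [NormedAlgebra ℂ C]
    [StarModule ℂ C]
    (D : StarSubalgebra ℂ C)
    (v : C) (hv : IsNormalizer (D : Set C) v)
    -- `σ` is a character of `D` (encoded as a function on `C`, constrained only on `D`)
    (σ : C → ℂ)
    (hσmul : ∀ a ∈ D, ∀ b ∈ D, σ (a * b) = σ a * σ b)
    (hmoved : ∃ d ∈ D, σ (star v * d * v) ≠ σ (star v * v) * σ d)
    -- `ρ` is a state on `C` extending `σ`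
    (ρ : C →ₗ[ℂ] ℂ) (hρ1 : ρ 1 = 1) (hρpos : ∀ x : C, 0 ≤ ρ (star x * x))
    (hρext : ∀ d ∈ D, ρ d = σ d) :
    ρ v = 0 := by
  have hρ : IsPositiveFunctional ρ := hρpos
  have hmul (a : C) (ha : a ∈ D) (b : C) (hb : b ∈ D) : ρ (a * b) = ρ a * ρ b := by
    rw [hρext _ (D.mul_mem ha hb), hσmul a ha b hb, hρext a ha, hρext b hb]
  by_contra hv0
  obtain ⟨d, hd, hβ⟩ := hmoved
  rw [← hρext _ (hv d hd).1, ← hρext _ hv.star_mul_self_mem, ← hρext d hd] at hβ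
  exact hβ (hρ.apply_star_mul_mul_eq hρ1 hmul hv hv0 hd)

/-- Let `(C,D)` be an inclusion, `v ∈ N(C,D)` a normalizer, and `σ` a character of `D` with
`σ(v*v) ≠ 0` and `β_v(σ) ≠ σ` (i.e. there is `d ∈ D` with `σ(v* d v) ≠ σ(v*v) σ(d)`).  Then
every state `ρ` on `C` restricting to `σ` on `D` satisfies `ρ(v) = 0`. -/
theorem state_vanishes_on_moved_normalizer
    {C : Type*} [NormedRing C] [StarRing C] [CStarRing C] [NormedAlgebra ℂ C]
    [CompleteSpace C] [StarModule ℂ C]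
    (D : StarSubalgebra ℂ C) (hDclosed : IsClosed (D : Set C))
    (hDcomm : ∀ a ∈ D, ∀ b ∈ D, a * b = b * a)
    (v : C) (hv : IsNormalizer (D : Set C) v)
    -- `σ` is a character of `D` (encoded as a function on `C`, constrained only on `D`)
    (σ : C → ℂ)
    (hσadd : ∀ a ∈ D, ∀ b ∈ D, σ (a + b) = σ a + σ b)
    (hσsmul : ∀ (c : ℂ), ∀ a ∈ D, σ (c • a) = c * σ a)
    (hσmul : ∀ a ∈ D, ∀ b ∈ D, σ (a * b) = σ a * σ b)
    (hσ1 : σ 1 = 1)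
    (hσvv : σ (star v * v) ≠ 0)
    (hmoved : ∃ d ∈ D, σ (star v * d * v) ≠ σ (star v * v) * σ d)
    -- `ρ` is a state on `C` extending `σ`
    (ρ : C →ₗ[ℂ] ℂ) (hρ1 : ρ 1 = 1) (hρpos : ∀ x : C, 0 ≤ ρ (star x * x))
    (hρext : ∀ d ∈ D, ρ d = σ d) :
    ρ v = 0 :=
  state_vanishes_on_moved_normalizer_general D v hv σ hσmul hmoved ρ hρ1 hρpos hρext
end

section
/- Let $(C,D)$ be a regular inclusion and let $F$ be a set of $D$-modular states on $C$ that is $N(C,D)$-invariant: for every $v \in N(C,D)$ and every $\rho \in F$ with $\rho(v^*v) \neq 0$, the state $x \mapsto \rho(v^* x v)/\rho(v^*v)$ belongs to $F$. Then $K_F := \{x \in C : \rho(x^*x) = 0 \text{ for all } \rho \in F\}$ is a closed two-sided ideal of $C$. Moreover, if the set of restrictions $\{\rho|_D : \rho \in F\}$ is weak-* dense in the character space of $D$, then $K_F \cap D = \{0\}$. -/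
/-!
By Cauchy–Schwarz for the GNS semi-inner product `⟨x, y⟩ = ρ (x⋆ y)`, the left kernel
`{x | ρ (x⋆x) = 0}` of a positive functional is a closed left ideal, hence so is `K_F`.
For a normalizer `v`, either `ρ (v⋆v) = 0`, and then `ρ (v⋆ y v) = 0` for all `y` by
Cauchy–Schwarz, or `ρ (v⋆ x⋆x v) = ρ (v⋆v) ρ_v (x⋆x)` for the state
`ρ_v = ρ (v⋆ · v) / ρ (v⋆v) ∈ F`; either way `K_F v ⊆ K_F`, and regularity plus closedness
give `K_F C ⊆ K_F`.
If `x ∈ K_F ∩ D`, Cauchy–Schwarz gives `ρ x = 0` for all `ρ ∈ F`, so by density every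
character of `D` vanishes at `x`, and `x = 0` by Gelfand duality.
-/

open scoped ComplexOrder

namespace PositiveLinearMap

variable {A : Type*} [CStarAlgebra A] [PartialOrder A] [StarOrderedRing A]

noncomputable def ofStarMulSelfNonneg (ρ : A →ₗ[ℂ] ℂ) (hρ : ∀ x, 0 ≤ ρ (star x * x)) :
    A →ₚ[ℂ] ℂ :=
  mk₀ ρ fun a ha => by
    obtain ⟨b, rfl⟩ := CStarAlgebra.nonneg_iff_eq_star_mul_self.mp ha
    exact hρ b

@[simp]
lemma ofStarMulSelfNonneg_apply (ρ : A →ₗ[ℂ] ℂ) (hρ : ∀ x, 0 ≤ ρ (star x * x)) (x : A) :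
    ofStarMulSelfNonneg ρ hρ x = ρ x := rfl

variable (f : A →ₚ[ℂ] ℂ)

lemma norm_toPreGNS_eq_zero {x : A} (hx : f (star x * x) = 0) : ‖f.toPreGNS x‖ = 0 := by
  have h := f.preGNS_norm_sq (f.toPreGNS x)
  rw [ofPreGNS_toPreGNS, hx] at h
  exact pow_eq_zero_iff two_ne_zero |>.mp (mod_cast h)

lemma apply_star_mul_eq_zero_left {x : A} (hx : f (star x * x) = 0) (y : A) :
    f (star x * y) = 0 := by
  have h := norm_inner_le_norm (𝕜 := ℂ) (f.toPreGNS x) (f.toPreGNS y)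
  rwa [f.norm_toPreGNS_eq_zero hx, zero_mul, norm_le_zero_iff] at h

lemma apply_star_mul_eq_zero_right {x : A} (hx : f (star x * x) = 0) (y : A) :
    f (star y * x) = 0 := by
  have h := norm_inner_le_norm (𝕜 := ℂ) (f.toPreGNS y) (f.toPreGNS x)
  rwa [f.norm_toPreGNS_eq_zero hx, mul_zero, norm_le_zero_iff] at h

def leftKernel : Submodule A A where
  carrier := {x | f (star x * x) = 0}
  zero_mem' := by simp
  add_mem' {x y} hx hy := by
    simp only [Set.mem_ofPred_eq, star_add, add_mul, mul_add, map_add] at *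
    rw [hx, hy, f.apply_star_mul_eq_zero_left hx, f.apply_star_mul_eq_zero_right hx]
    simp
  smul_mem' c x hx := by
    refine le_antisymm ?_ (f.map_nonneg (star_mul_self_nonneg _))
    have hle : star x * (star c * c) * x ≤ ‖star c * c‖ • (star x * x) :=
      CStarAlgebra.star_left_conjugate_le_norm_smul
    calc f (star (c * x) * (c * x)) = f (star x * (star c * c) * x) := by
          simp only [star_mul, mul_assoc]
      _ ≤ f (‖star c * c‖ • (star x * x)) := OrderHomClass.mono f hle
      _ = 0 := by rw [← Complex.coe_smul, map_smul, hx, smul_zero]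

lemma mem_leftKernel {x : A} : x ∈ f.leftKernel ↔ f (star x * x) = 0 := Iff.rfl

-- Positive maps between C⋆-algebras are automatically continuous.
lemma isClosed_leftKernel : IsClosed (f.leftKernel : Set A) :=
  isClosed_eq (by fun_prop) continuous_const

lemma mul_mem_leftKernel_of_apply_star_mul_self_eq_zero {v : A} (hv : f (star v * v) = 0)
    (x : A) : x * v ∈ f.leftKernel := by
  rw [mem_leftKernel, star_mul, mul_assoc]
  exact f.apply_star_mul_eq_zero_left hv _

lemma coe_biInf_leftKernel_preimage_toLinearMap {F : Set (A →ₗ[ℂ] ℂ)}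
    (hF : ∀ ρ ∈ F, ∀ x, 0 ≤ ρ (star x * x)) :
    ((⨅ f ∈ toLinearMap ⁻¹' F, f.leftKernel : Submodule A A) : Set A) =
      {x : A | ∀ ρ ∈ F, ρ (star x * x) = 0} := by
  ext x
  simp only [Set.mem_ofPred_eq, SetLike.mem_coe, Submodule.mem_iInf, mem_leftKernel]
  exact ⟨fun hx ρ hρ => hx (ofStarMulSelfNonneg ρ (hF ρ hρ)) hρ, fun hx f hf => hx _ hf⟩

variable {F : Set (A →ₚ[ℂ] ℂ)}

lemma isClosed_biInf_leftKernel : IsClosed ((⨅ f ∈ F, f.leftKernel : Submodule A A) : Set A) := by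
  simpa only [Submodule.coe_iInf] using
    isClosed_iInter fun f => isClosed_iInter fun _ => f.isClosed_leftKernel

lemma mul_mem_biInf_leftKernel {v : A}
    (hF : ∀ f ∈ F, f (star v * v) ≠ 0 → ∃ g ∈ F, ∀ y, g y = f (star v * y * v) / f (star v * v))
    {x : A} (hx : x ∈ ⨅ f ∈ F, f.leftKernel) : x * v ∈ ⨅ f ∈ F, f.leftKernel := by
  simp only [Submodule.mem_iInf] at hx ⊢
  intro f hf
  by_cases hv : f (star v * v) = 0
  · exact f.mul_mem_leftKernel_of_apply_star_mul_self_eq_zero hv x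
  obtain ⟨g, hg, hgf⟩ := hF f hf hv
  have hgx := hx g hg
  rw [mem_leftKernel, hgf, div_eq_zero_iff, or_iff_left hv] at hgx
  rw [mem_leftKernel, star_mul]
  simpa only [mul_assoc] using hgx

end PositiveLinearMap

lemma Submodule.mul_mem_of_dense_span {R A : Type*} [CommSemiring R] [Ring A] [Algebra R A]
    [TopologicalSpace A] [ContinuousMul A] {I : Submodule A A} (hI : IsClosed (I : Set A))
    {S : Set A} (hS : Dense (span R S : Set A)) {x : A} (hx : ∀ v ∈ S, x * v ∈ I) (c : A) :
    x * c ∈ I := by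
  let J : Submodule R A := (I.restrictScalars R).comap (LinearMap.mulLeft R x)
  have hJ : IsClosed (J : Set A) := hI.preimage (continuous_const_mul x)
  exact hJ.closure_subset_iff.mpr (span_le.mpr hx) (hS c)

lemma eq_zero_of_forall_characterSpace_apply_eq_zero {B : Type*} [CommCStarAlgebra B] {b : B}
    (h : ∀ φ : WeakDual.characterSpace ℂ B, φ b = 0) : b = 0 :=
  (gelfandTransform_isometry B).injective (by ext φ; simp [h])

namespace StarSubalgebra

variable {A : Type*}

lemma exists_extend_characterSpace [NormedRing A] [NormedAlgebra ℂ A] [StarRing A]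
    [StarModule ℂ A] (D : StarSubalgebra ℂ A) (φ : WeakDual.characterSpace ℂ D) :
    ∃ σ : A → ℂ, (∀ a ∈ D, ∀ b ∈ D, σ (a + b) = σ a + σ b) ∧
      (∀ (c : ℂ), ∀ a ∈ D, σ (c • a) = c * σ a) ∧
      (∀ a ∈ D, ∀ b ∈ D, σ (a * b) = σ a * σ b) ∧ σ 1 = 1 ∧ ∀ d : D, σ d = φ d := by
  classical
  refine ⟨fun a => if h : a ∈ D then φ ⟨a, h⟩ else 0, ?_, ?_, ?_, ?_, ?_⟩
  · intro a ha b hb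
    simp only [dif_pos ha, dif_pos hb, dif_pos (add_mem ha hb)]
    exact map_add φ ⟨a, ha⟩ ⟨b, hb⟩
  · intro c a ha
    simp only [dif_pos ha, dif_pos (D.smul_mem ha c)]
    exact map_smul φ c ⟨a, ha⟩
  · intro a ha b hb
    simp only [dif_pos ha, dif_pos hb, dif_pos (mul_mem ha hb)]
    exact map_mul φ ⟨a, ha⟩ ⟨b, hb⟩
  · simp only [dif_pos (one_mem D)]
    exact map_one φ
  · intro d
    simp only [dif_pos d.2]

variable [CStarAlgebra A] {D : StarSubalgebra ℂ A}

noncomputable abbrev commCStarAlgebraOfComm (hD : IsClosed (D : Set A))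
    (hcomm : ∀ a ∈ D, ∀ b ∈ D, a * b = b * a) : CommCStarAlgebra D :=
  { StarSubalgebra.cstarAlgebra D (h_closed := hD) with
    mul_comm := fun a b => Subtype.ext (hcomm a a.2 b b.2) }

lemma eq_zero_of_forall_apply_eq_zero_of_dense (hD : IsClosed (D : Set A))
    (hcomm : ∀ a ∈ D, ∀ b ∈ D, a * b = b * a) {Φ : Type*} [FunLike Φ A ℂ] {F : Set Φ}
    (hdense : ∀ σ : A → ℂ,
        (∀ a ∈ D, ∀ b ∈ D, σ (a + b) = σ a + σ b) →
        (∀ (c : ℂ), ∀ a ∈ D, σ (c • a) = c * σ a) →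
        (∀ a ∈ D, ∀ b ∈ D, σ (a * b) = σ a * σ b) →
        σ 1 = 1 →
        ∀ ε > (0 : ℝ), ∀ s : Finset A, (∀ d ∈ s, d ∈ D) →
          ∃ ρ ∈ F, ∀ d ∈ s, ‖ρ d - σ d‖ < ε)
    {x : A} (hxD : x ∈ D) (hx : ∀ ρ ∈ F, ρ x = 0) : x = 0 := by
  let _ := commCStarAlgebraOfComm hD hcomm
  have hx0 : (⟨x, hxD⟩ : D) = 0 := eq_zero_of_forall_characterSpace_apply_eq_zero fun φ => by
    obtain ⟨σ, hadd, hsmul, hmul, hone, hσφ⟩ := D.exists_extend_characterSpace φ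
    by_contra hne
    obtain ⟨ρ, hρ, hclose⟩ := hdense σ hadd hsmul hmul hone ‖φ ⟨x, hxD⟩‖ (norm_pos_iff.mpr hne)
      {x} (by simpa)
    simpa [hx ρ hρ, ← hσφ] using hclose x (Finset.mem_singleton_self x)
  simpa using congrArg Subtype.val hx0

end StarSubalgebra

theorem invariant_states_left_kernel_isIdeal_general
    {C : Type*} [NormedRing C] [StarRing C] [CStarRing C] [NormedAlgebra ℂ C]
    [CompleteSpace C] [StarModule ℂ C]
    (D : StarSubalgebra ℂ C) (hDclosed : IsClosed (D : Set C))
    (hDcomm : ∀ a ∈ D, ∀ b ∈ D, a * b = b * a)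
    -- regularity: the span of the normalizers is dense in `C`
    (hreg : Dense ((Submodule.span ℂ {v : C | IsNormalizer (D : Set C) v} : Submodule ℂ C) : Set C))
    (F : Set (C →ₗ[ℂ] ℂ))
    -- every element of `F` is a `D`-modular state
    (hFstate : ∀ ρ ∈ F, ρ 1 = 1 ∧ ∀ x : C, 0 ≤ ρ (star x * x))
    -- `F` is `N(C,D)`-invariant
    (hFinv : ∀ v : C, IsNormalizer (D : Set C) v → ∀ ρ ∈ F, ρ (star v * v) ≠ 0 →
      ∃ ρ' ∈ F, ∀ x : C, ρ' x = ρ (star v * x * v) / ρ (star v * v)) :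
    (IsClosed {x : C | ∀ ρ ∈ F, ρ (star x * x) = 0} ∧
      (0 : C) ∈ {x : C | ∀ ρ ∈ F, ρ (star x * x) = 0} ∧
      (∀ x ∈ {x : C | ∀ ρ ∈ F, ρ (star x * x) = 0},
        ∀ y ∈ {x : C | ∀ ρ ∈ F, ρ (star x * x) = 0},
          x + y ∈ {x : C | ∀ ρ ∈ F, ρ (star x * x) = 0}) ∧
      (∀ x ∈ {x : C | ∀ ρ ∈ F, ρ (star x * x) = 0}, ∀ c : C,
        c * x ∈ {x : C | ∀ ρ ∈ F, ρ (star x * x) = 0} ∧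
        x * c ∈ {x : C | ∀ ρ ∈ F, ρ (star x * x) = 0})) ∧
    -- if the restrictions of `F` to `D` are weak-* dense in the character space of `D`,
    -- then `K_F ∩ D = (0)`
    ((∀ σ : C → ℂ,
        (∀ a ∈ D, ∀ b ∈ D, σ (a + b) = σ a + σ b) →
        (∀ (c : ℂ), ∀ a ∈ D, σ (c • a) = c * σ a) →
        (∀ a ∈ D, ∀ b ∈ D, σ (a * b) = σ a * σ b) →
        σ 1 = 1 →
        ∀ ε > (0 : ℝ), ∀ s : Finset C, (∀ d ∈ s, d ∈ D) →
          ∃ ρ ∈ F, ∀ d ∈ s, ‖ρ d - σ d‖ < ε) →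
      ∀ x ∈ {x : C | ∀ ρ ∈ F, ρ (star x * x) = 0}, x ∈ D → x = 0) := by
  let _ : CStarAlgebra C := {}
  let _ : PartialOrder C := CStarAlgebra.spectralOrder C
  let _ : StarOrderedRing C := CStarAlgebra.spectralOrderedRing C
  have hpos : ∀ ρ ∈ F, ∀ x : C, 0 ≤ ρ (star x * x) := fun ρ hρ => (hFstate ρ hρ).2
  set P : Set (C →ₚ[ℂ] ℂ) := PositiveLinearMap.toLinearMap ⁻¹' F
  set I : Submodule C C := ⨅ f ∈ P, f.leftKernel
  have hK : (I : Set C) = {x : C | ∀ ρ ∈ F, ρ (star x * x) = 0} :=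
    PositiveLinearMap.coe_biInf_leftKernel_preimage_toLinearMap hpos
  have hinv : ∀ v, IsNormalizer (D : Set C) v → ∀ f ∈ P, f (star v * v) ≠ 0 →
      ∃ g ∈ P, ∀ y, g y = f (star v * y * v) / f (star v * v) := by
    intro v hv f hf hfv
    obtain ⟨ρ, hρ, hρf⟩ := hFinv v hv f.toLinearMap hf hfv
    exact ⟨PositiveLinearMap.ofStarMulSelfNonneg ρ (hpos ρ hρ), hρ, hρf⟩
  have hright : ∀ x ∈ I, ∀ c, x * c ∈ I := fun x hx =>
    Submodule.mul_mem_of_dense_span PositiveLinearMap.isClosed_biInf_leftKernel hreg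
      fun v hv => PositiveLinearMap.mul_mem_biInf_leftKernel (hinv v hv) hx
  refine ⟨?_, fun hdense x hx hxD =>
    D.eq_zero_of_forall_apply_eq_zero_of_dense hDclosed hDcomm hdense hxD fun ρ hρ => ?_⟩
  · rw [← hK]
    exact ⟨PositiveLinearMap.isClosed_biInf_leftKernel, I.zero_mem,
      fun x hx y hy => I.add_mem hx hy, fun x hx c => ⟨I.smul_mem c hx, hright x hx c⟩⟩
  · simpa using (PositiveLinearMap.ofStarMulSelfNonneg ρ (hpos ρ hρ)).apply_star_mul_eq_zero_right
      (hx ρ hρ) 1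

/-- Let `(C,D)` be a regular inclusion and `F` an `N(C,D)`-invariant family of `D`-modular
states.  Then `K_F = {x : ρ(x*x) = 0 for all ρ ∈ F}` is a closed two-sided ideal of `C`;
moreover if the restrictions `{ρ|_D : ρ ∈ F}` are weak-* dense in the character space of `D`,
then `K_F ∩ D = (0)`. -/
theorem invariant_states_left_kernel_isIdeal
    {C : Type*} [NormedRing C] [StarRing C] [CStarRing C] [NormedAlgebra ℂ C]
    [CompleteSpace C] [StarModule ℂ C]
    (D : StarSubalgebra ℂ C) (hDclosed : IsClosed (D : Set C))
    (hDcomm : ∀ a ∈ D, ∀ b ∈ D, a * b = b * a)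
    -- regularity: the span of the normalizers is dense in `C`
    (hreg : Dense ((Submodule.span ℂ {v : C | IsNormalizer (D : Set C) v} : Submodule ℂ C) : Set C))
    (F : Set (C →ₗ[ℂ] ℂ))
    -- every element of `F` is a `D`-modular state
    (hFstate : ∀ ρ ∈ F, ρ 1 = 1 ∧ ∀ x : C, 0 ≤ ρ (star x * x))
    (hFmod : ∀ ρ ∈ F, ∀ d ∈ D, ∀ x : C, ρ (d * x) = ρ d * ρ x ∧ ρ (x * d) = ρ x * ρ d)
    -- `F` is `N(C,D)`-invariant
    (hFinv : ∀ v : C, IsNormalizer (D : Set C) v → ∀ ρ ∈ F, ρ (star v * v) ≠ 0 →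
      ∃ ρ' ∈ F, ∀ x : C, ρ' x = ρ (star v * x * v) / ρ (star v * v)) :
    (IsClosed {x : C | ∀ ρ ∈ F, ρ (star x * x) = 0} ∧
      (0 : C) ∈ {x : C | ∀ ρ ∈ F, ρ (star x * x) = 0} ∧
      (∀ x ∈ {x : C | ∀ ρ ∈ F, ρ (star x * x) = 0},
        ∀ y ∈ {x : C | ∀ ρ ∈ F, ρ (star x * x) = 0},
          x + y ∈ {x : C | ∀ ρ ∈ F, ρ (star x * x) = 0}) ∧
      (∀ x ∈ {x : C | ∀ ρ ∈ F, ρ (star x * x) = 0}, ∀ c : C,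
        c * x ∈ {x : C | ∀ ρ ∈ F, ρ (star x * x) = 0} ∧
        x * c ∈ {x : C | ∀ ρ ∈ F, ρ (star x * x) = 0})) ∧
    -- if the restrictions of `F` to `D` are weak-* dense in the character space of `D`,
    -- then `K_F ∩ D = (0)`
    ((∀ σ : C → ℂ,
        (∀ a ∈ D, ∀ b ∈ D, σ (a + b) = σ a + σ b) →
        (∀ (c : ℂ), ∀ a ∈ D, σ (c • a) = c * σ a) →
        (∀ a ∈ D, ∀ b ∈ D, σ (a * b) = σ a * σ b) →
        σ 1 = 1 →
        ∀ ε > (0 : ℝ), ∀ s : Finset C, (∀ d ∈ s, d ∈ D) →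
          ∃ ρ ∈ F, ∀ d ∈ s, ‖ρ d - σ d‖ < ε) →
      ∀ x ∈ {x : C | ∀ ρ ∈ F, ρ (star x * x) = 0}, x ∈ D → x = 0) :=
  invariant_states_left_kernel_isIdeal_general D hDclosed hDcomm hreg F hFstate hFinv
end

section
/- Let $(C,D)$ be a regular MASA inclusion and let $v \in N(C,D)$. Let $J_v := \{d \in D : vd = dv \in D\} \cap \langle v^*v \rangle$, where $\langle v^*v \rangle$ is the closed ideal of $D$ generated by $v^*v$, and let $K_v$ be the closed ideal of $D$ generated by $\{g \in D : g\,(v^*v) = 0\}$ together with $\{v^*hv - h\,v^*v : h \in D\}$. Then $J_v \vee K_v$ is an essential ideal of $D$. Equivalently: if $d \in D$ satisfies (i) $dg = 0$ for every $g \in J_v$, (ii) $dg = 0$ for every $g \in D$ with $g\,(v^*v) = 0$, and (iii) $d\,(v^*hv - h\,v^*v) = 0$ for every $h \in D$, then $d = 0$. -/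
/-!
Put `f = v⋆v` and `e = d⋆d`. Hypothesis (iii) says `e (v⋆hv) = e h f` for `h ∈ D`, which makes
`x = v e f` commute with `D`, so `x ∈ D` by maximality. The element `g = e f²` lies in `⟨v⋆v⟩`,
`v g = x f ∈ D`, and `v g = g v` because each of the four terms of `(vg - gv)⋆(vg - gv)` equals
`e² f⁵` (for `v⋆g²v` this uses that `x`, being in `D`, is normal). So `d g = 0` by (i); since `d`
is normal, (ii) lets us strip off the two factors `f`, leaving `d e = 0`, whence `d = 0`.
-/

theorem mul_left_comm_of_mem {C S : Type*} [Semigroup C] [SetLike S C] {D : S}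
    (hD : ∀ a ∈ D, ∀ b ∈ D, a * b = b * a) {a b : C} (ha : a ∈ D) (hb : b ∈ D) (x : C) :
    a * (b * x) = b * (a * x) := by
  rw [← mul_assoc, hD a ha b hb, mul_assoc]

namespace IsNormalizer

variable {C S : Type*} [Semiring C] [StarRing C] [SetLike S C] [SubsemiringClass S C]
  {D : S} {v : C}

theorem star_mul_self_mem_s9 (hv : IsNormalizer (D : Set C) v) : star v * v ∈ D := by
  simpa using (hv 1 (one_mem D)).1

theorem commute_mul_mul_star_mul_self (hD : ∀ a ∈ D, ∀ b ∈ D, a * b = b * a)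
    (hv : IsNormalizer (D : Set C) v) {e : C} (he : e ∈ D)
    (hfix : ∀ h ∈ D, e * (star v * h * v) = e * (h * (star v * v))) {h : C} (hh : h ∈ D) :
    Commute (v * e * (star v * v)) h :=
  calc v * e * (star v * v) * h = v * (e * (h * (star v * v))) := by
        rw [mul_assoc, mul_assoc, hD _ hv.star_mul_self_mem_s9 h hh]
    _ = v * e * star v * h * v := by rw [← hfix h hh]; simp only [mul_assoc]
    _ = h * (v * e * star v) * v := by rw [hD _ (hv e he).2 h hh]
    _ = h * (v * e * (star v * v)) := by simp only [mul_assoc]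

theorem mul_conj_eq_mul_star_mul_self_mul (hD : ∀ a ∈ D, ∀ b ∈ D, a * b = b * a)
    (hv : IsNormalizer (D : Set C) v) {e : C} (he : e ∈ D)
    (hfix : ∀ h ∈ D, e * (star v * h * v) = e * (h * (star v * v))) :
    e * (star v * v) * (star v * v) * (star v * (e * (star v * v) * (star v * v)) * v) =
      e * (star v * v) * (star v * v) * (star v * v) * (e * (star v * v) * (star v * v)) := by
  have hf := hv.star_mul_self_mem_s9
  generalize star v * v = f at hf hfix ⊢
  calc _ = f * (f * (e * (star v * (e * f * f) * v))) := by
        simp only [mul_assoc, mul_left_comm_of_mem hD he hf]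
    _ = _ := by
        rw [hfix _ (mul_mem (mul_mem he hf) hf)]
        simp only [mul_assoc, mul_left_comm_of_mem hD he hf, hD e he f hf]

theorem conj_mul_self_eq_conj_mul [StarMemClass S C] (hD : ∀ a ∈ D, ∀ b ∈ D, a * b = b * a)
    (hv : IsNormalizer (D : Set C) v) {e : C} (he : e ∈ D) (he_sa : IsSelfAdjoint e)
    (hfix : ∀ h ∈ D, e * (star v * h * v) = e * (h * (star v * v)))
    (hx : v * e * (star v * v) ∈ D) :
    star v * (e * (star v * v) * (star v * v) * (e * (star v * v) * (star v * v))) * v =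
      star v * (e * (star v * v) * (star v * v)) * v * (e * (star v * v) * (star v * v)) := by
  have hA := hv.mul_conj_eq_mul_star_mul_self_mul hD he hfix
  set f := star v * v
  have hf : f ∈ D := hv.star_mul_self_mem_s9
  have hg : e * f * f ∈ D := mul_mem (mul_mem he hf) hf
  have hf_sa : star f = f := (IsSelfAdjoint.star_mul_self v).star_eq
  have hx_normal : v * e * f * (f * e * star v) = f * e * star v * (v * e * f) := by
    simpa only [star_mul, he_sa.star_eq, hf_sa, mul_assoc] using hD _ hx _ (star_mem hx)
  have hvv : ∀ X, star v * (v * X) = f * X := fun X => by rw [← mul_assoc]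
  rw [hD _ (hv _ hg).1 _ hg, hA]
  calc star v * (e * f * f * (e * f * f)) * v
      = star v * (f * e * star v * (v * e * f)) * (f * v) := by
        simp only [mul_assoc, hvv, mul_left_comm_of_mem hD he hf, hD e he f hf]
    _ = f * (e * (f * (f * (e * (star v * f * v))))) := by
        rw [← hx_normal]; simp only [mul_assoc, hvv]
    _ = e * f * f * f * (e * f * f) := by
        rw [hfix f hf]; simp only [mul_assoc, mul_left_comm_of_mem hD he hf, hD e he f hf]

end IsNormalizer

section CStarRing

variable {E : Type*} [NonUnitalNormedRing E] [StarRing E] [CStarRing E]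

theorem CStarRing.eq_of_star_mul_eq {a b : E} (ha : star a * a = star a * b)
    (hb : star b * b = star b * a) : a = b := by
  rw [← sub_eq_zero, ← CStarRing.star_mul_self_eq_zero_iff, star_sub, sub_mul, mul_sub, mul_sub,
    ha, hb, sub_self, sub_self, sub_zero]

theorem IsStarNormal.mul_eq_zero_of_mul_mul_eq_zero {d : E} (hd : IsStarNormal d) {a : E}
    (h : d * (d * a) = 0) : d * a = 0 := by
  have hsd : star d * (d * a) = 0 := by
    rw [← CStarRing.star_mul_self_eq_zero_iff]
    calc star (star d * (d * a)) * (star d * (d * a))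
        = star a * (star d * (d * star d) * (d * a)) := by
          simp only [star_mul, star_star, mul_assoc]
      _ = 0 := by rw [← hd.star_comm_self.eq]; simp only [mul_assoc, h, mul_zero]
  rw [← CStarRing.star_mul_self_eq_zero_iff, star_mul, mul_assoc, hsd, mul_zero]

end CStarRing

theorem IsNormalizer.commute_mul_star_mul_self_mul_star_mul_self {C S : Type*} [NormedRing C]
    [StarRing C] [CStarRing C] [SetLike S C] [SubsemiringClass S C] [StarMemClass S C]
    {D : S} {v e : C}
    (hD : ∀ a ∈ D, ∀ b ∈ D, a * b = b * a) (hv : IsNormalizer (D : Set C) v) (he : e ∈ D)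
    (he_sa : IsSelfAdjoint e) (hfix : ∀ h ∈ D, e * (star v * h * v) = e * (h * (star v * v)))
    (hx : v * e * (star v * v) ∈ D) :
    Commute v (e * (star v * v) * (star v * v)) := by
  have hf := hv.star_mul_self_mem_s9
  have hg_sa : star (e * (star v * v) * (star v * v)) = e * (star v * v) * (star v * v) := by
    simp only [star_mul, star_star, he_sa.star_eq, mul_assoc, hD e he _ hf]
  apply CStarRing.eq_of_star_mul_eq
  · rw [star_mul, hg_sa]
    simpa only [mul_assoc] using (hv.mul_conj_eq_mul_star_mul_self_mul hD he hfix).symm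
  · rw [star_mul, hg_sa]
    simpa only [mul_assoc] using hv.conj_mul_self_eq_conj_mul hD he he_sa hfix hx

theorem JvKv_essential_general
    {C : Type*} [NormedRing C] [StarRing C] [CStarRing C] [NormedAlgebra ℂ C]
    [StarModule ℂ C]
    (D : StarSubalgebra ℂ C)
    (hDcomm : ∀ a ∈ D, ∀ b ∈ D, a * b = b * a)
    -- `D` is a MASA in `C`
    (hmasa : ∀ x : C, (∀ d ∈ D, x * d = d * x) → x ∈ D)
    (v : C) (hv : IsNormalizer (D : Set C) v)
    (d : C) (hd : d ∈ D)
    -- (i) `d` annihilates `J_v`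
    (hJ : ∀ g : C, g ∈ D → v * g = g * v → v * g ∈ D →
      g ∈ closure {x : C | ∃ e ∈ D, x = e * (star v * v)} → d * g = 0)
    -- (ii) `d` annihilates `⟨v*v⟩^⊥`
    (hperp : ∀ g ∈ D, g * (star v * v) = 0 → d * g = 0)
    -- (iii) `d` annihilates the elements `v* h v - h (v*v)`, `h ∈ D`
    (hfix : ∀ h ∈ D, d * (star v * h * v - h * (star v * v)) = 0) :
    d = 0 := by
  set f := star v * v
  set e := star d * d
  have hf : f ∈ D := hv.star_mul_self_mem_s9
  have he : e ∈ D := mul_mem (star_mem hd) hd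
  have he_fix : ∀ h ∈ D, e * (star v * h * v) = e * (h * f) := fun h hh => by
    rw [← sub_eq_zero, ← mul_sub, mul_assoc, hfix h hh, mul_zero]
  have hx : v * e * f ∈ D :=
    hmasa _ fun h hh => (hv.commute_mul_mul_star_mul_self hDcomm he he_fix hh).eq
  have hdg : d * (e * f * f) = 0 :=
    hJ _ (mul_mem (mul_mem he hf) hf)
      (hv.commute_mul_star_mul_self_mul_star_mul_self hDcomm he (.star_mul_self d) he_fix hx).eq
      (by simpa only [mul_assoc] using mul_mem hx hf)
      (subset_closure ⟨e * f, mul_mem he hf, rfl⟩)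
  have hd_normal : IsStarNormal d := ⟨hDcomm _ (star_mem hd) _ hd⟩
  have hcancel : ∀ a ∈ D, d * a * f = 0 → d * a = 0 := fun a ha h =>
    hd_normal.mul_eq_zero_of_mul_mul_eq_zero (hperp _ (mul_mem hd ha) h)
  have hde : d * e = 0 :=
    hcancel e he <| by
      rw [mul_assoc]
      exact hcancel _ (mul_mem he hf) (by simpa only [mul_assoc] using hdg)
  rw [← CStarRing.mul_star_self_eq_zero_iff]
  refine hd_normal.mul_eq_zero_of_mul_mul_eq_zero ?_
  rwa [← hd_normal.star_comm_self.eq]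

/-- Let `(C,D)` be a regular MASA inclusion and `v ∈ N(C,D)`.  With
`J_v = {d ∈ D : vd = dv ∈ D} ∩ ⟨v*v⟩` and `K_v = ⟨v*v⟩^⊥ ∨ ⟨{v*hv - h v*v : h ∈ D}⟩`, the
ideal `J_v ∨ K_v` is essential in `D`.  Equivalently (as stated here): if `d ∈ D` annihilates
`J_v`, annihilates every `g ∈ D` with `g (v*v) = 0`, and annihilates every
`v* h v - h (v*v)` with `h ∈ D`, then `d = 0`. -/
theorem JvKv_essential
    {C : Type*} [NormedRing C] [StarRing C] [CStarRing C] [NormedAlgebra ℂ C]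
    [CompleteSpace C] [StarModule ℂ C]
    (D : StarSubalgebra ℂ C) (hDclosed : IsClosed (D : Set C))
    (hDcomm : ∀ a ∈ D, ∀ b ∈ D, a * b = b * a)
    -- `D` is a MASA in `C`
    (hmasa : ∀ x : C, (∀ d ∈ D, x * d = d * x) → x ∈ D)
    -- regularity: the span of the normalizers is dense in `C`
    (hreg : Dense
      ((Submodule.span ℂ {v : C | IsNormalizer (D : Set C) v} : Submodule ℂ C) : Set C))
    (v : C) (hv : IsNormalizer (D : Set C) v)
    (d : C) (hd : d ∈ D)
    -- (i) `d` annihilates `J_v`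
    (hJ : ∀ g : C, g ∈ D → v * g = g * v → v * g ∈ D →
      g ∈ closure {x : C | ∃ e ∈ D, x = e * (star v * v)} → d * g = 0)
    -- (ii) `d` annihilates `⟨v*v⟩^⊥`
    (hperp : ∀ g ∈ D, g * (star v * v) = 0 → d * g = 0)
    -- (iii) `d` annihilates the elements `v* h v - h (v*v)`, `h ∈ D`
    (hfix : ∀ h ∈ D, d * (star v * h * v - h * (star v * v)) = 0) :
    d = 0 :=
  JvKv_essential_general D hDcomm hmasa v hv d hd hJ hperp hfix
end

section
/- Let $(C,D)$ be an inclusion and let $\rho$ be a $D$-compatible state on $C$. Then: (1) for every normalizer $v \in N(C,D)$ with $\rho(v) \neq 0$ and every $x \in C$, $\rho(vx) = \rho(v)\rho(x) = \rho(xv)$; (2) the restriction of $\rho$ to $D$ is multiplicative, i.e., $\rho(d_1 d_2) = \rho(d_1)\rho(d_2)$ for all $d_1, d_2 \in D$; (3) for every $v \in N(C,D)$ with $\rho(v) \neq 0$ and every $x \in C$, $\rho(v^* x v) = \rho(v^*v)\rho(x)$. -/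
open scoped ComplexOrder

/-!
A positive functional `ρ` is hermitian and satisfies the Cauchy–Schwarz consequence
`ρ(b*b) = 0 → ρ(ab) = 0`. For a normalizer `v` with `ρ(v) ≠ 0`, compatibility says
`ρ(v*v) = |ρ(v)|²`, and the same holds for `v*`, which is again a normalizer. Hence
`w = v - ρ(v)·1` satisfies `ρ(w*w) = ρ(ww*) = 0`, so `ρ(xw) = ρ(wx) = 0` for all `x`: this is (1),
and (3) follows from (1) applied to `v*` and to `v`. For (2), every `d ∈ D` is a normalizer,
and if `ρ(d) = 0` one applies (1) to `d + 1` instead.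
-/

open ComplexConjugate

theorem IsNormalizer.star {C : Type*} [Mul C] [InvolutiveStar C] {S : Set C} {v : C}
    (hv : IsNormalizer S v) : IsNormalizer S (star v) := by
  intro d hd
  rw [star_star]
  exact (hv d hd).symm

theorem isNormalizer_of_mem {C T : Type*} [Mul C] [Star C] [SetLike T C] [MulMemClass T C]
    [StarMemClass T C] {D : T} {d : C} (hd : d ∈ D) : IsNormalizer (D : Set C) d :=
  fun _ hd' => ⟨mul_mem (mul_mem (star_mem hd) hd') hd, mul_mem (mul_mem hd hd') (star_mem hd)⟩

section PositiveFunctional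

variable {A : Type*} [Ring A] [StarRing A] [Algebra ℂ A] [StarModule ℂ A] {ρ : A →ₗ[ℂ] ℂ}

theorem map_star_of_nonneg (hρ : ∀ x : A, 0 ≤ ρ (star x * x)) (x : A) :
    ρ (star x) = conj (ρ x) := by
  have him (y : A) : (ρ (star y * y)).im = 0 := (Complex.le_def.mp (hρ y)).2.symm
  have hρ1 : (ρ 1).im = 0 := by simpa using him 1
  have h₁ : star (1 + x) * (1 + x) = 1 + x + star x + star x * x := by
    rw [star_add, star_one]; noncomm_ring
  have h₂ : star (1 + Complex.I • x) * (1 + Complex.I • x)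
      = 1 + Complex.I • x + (-Complex.I) • star x + star x * x := by
    rw [star_add, star_one, star_smul, Complex.star_def, Complex.conj_I]
    simp only [add_mul, mul_add, one_mul, mul_one, smul_mul_assoc, mul_smul_comm]
    match_scalars <;> simp
  have him_sum := him (1 + x)
  have hre_diff := him (1 + Complex.I • x)
  rw [h₁, map_add, map_add, map_add] at him_sum
  rw [h₂, map_add, map_add, map_add, map_smul, map_smul] at hre_diff
  simp only [Complex.add_im, hρ1, him x, smul_eq_mul, Complex.mul_im, Complex.I_re,
    Complex.I_im, Complex.neg_re, Complex.neg_im] at him_sum hre_diff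
  apply Complex.ext
  · rw [Complex.conj_re]; linarith
  · rw [Complex.conj_im]; linarith

theorem map_mul_eq_zero_of_map_star_mul_self_eq_zero (hρ : ∀ x : A, 0 ≤ ρ (star x * x))
    {b : A} (hb : ρ (star b * b) = 0) (a : A) : ρ (a * b) = 0 := by
  set z := ρ (a * b)
  have hexpand (t : ℂ) : star (star a + t • b) * (star a + t • b)
      = a * star a + t • (a * b) + conj t • star (a * b) + (conj t * t) • (star b * b) := by
    rw [star_add, star_smul, star_star, star_mul, Complex.star_def]
    simp only [add_mul, mul_add, smul_mul_assoc, mul_smul_comm]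
    module
  -- `0 ≤ ρ((a* + t b)*(a* + t b)) = ρ(aa*) - 2s|z|²` for `t = -s z̄`, `s` real, forces `z = 0`.
  have hbound (s : ℝ) : 2 * s * Complex.normSq z ≤ (ρ (a * star a)).re := by
    have hval : ρ (star (star a + (-(s : ℂ) * conj z) • b) * (star a + (-(s : ℂ) * conj z) • b))
        = ρ (a * star a) - ((2 * s * Complex.normSq z : ℝ) : ℂ) := by
      rw [hexpand, map_add, map_add, map_add, map_smul, map_smul, map_smul, hb,
        map_star_of_nonneg hρ]
      simp only [smul_eq_mul, mul_zero, add_zero, map_mul, map_neg, Complex.conj_ofReal,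
        Complex.conj_conj]
      push_cast
      linear_combination (-(2 : ℂ) * s) * Complex.mul_conj z
    have := (Complex.le_def.mp (hval ▸ hρ _)).1
    simp only [Complex.zero_re, Complex.sub_re, Complex.ofReal_re] at this
    linarith
  by_contra hz
  have hpos : 0 < Complex.normSq z := Complex.normSq_pos.mpr hz
  have hs : 2 * (((ρ (a * star a)).re + 1) / (2 * Complex.normSq z)) * Complex.normSq z
      = (ρ (a * star a)).re + 1 := by
    field_simp
  linarith [hbound (((ρ (a * star a)).re + 1) / (2 * Complex.normSq z))]

theorem map_mul_right_of_map_star_mul_self (hρ : ∀ x : A, 0 ≤ ρ (star x * x))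
    (hρ1 : ρ 1 = 1) {v : A} (hv : ρ (star v * v) = conj (ρ v) * ρ v) (x : A) :
    ρ (x * v) = ρ x * ρ v := by
  set w := v - ρ v • (1 : A)
  have hw : ρ (star w * w) = 0 := by
    have hexpand : star w * w
        = star v * v - ρ v • star v - conj (ρ v) • v + (conj (ρ v) * ρ v) • 1 := by
      simp only [w, star_sub, star_smul, star_one, Complex.star_def, sub_mul, mul_sub,
        smul_mul_assoc, mul_smul_comm, mul_one, one_mul]
      module
    rw [hexpand, map_add, map_sub, map_sub, map_smul, map_smul, map_smul, hρ1,
      map_star_of_nonneg hρ, hv, smul_eq_mul, smul_eq_mul, smul_eq_mul]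
    ring
  have hxv : x * v = x * w + ρ v • x := by simp only [w, mul_sub, mul_smul_comm, mul_one]; abel
  rw [hxv, map_add, map_mul_eq_zero_of_map_star_mul_self_eq_zero hρ hw, map_smul, smul_eq_mul,
    zero_add, mul_comm]

theorem map_mul_left_of_map_mul_self_star (hρ : ∀ x : A, 0 ≤ ρ (star x * x))
    (hρ1 : ρ 1 = 1) {v : A} (hv : ρ (v * star v) = ρ v * conj (ρ v)) (x : A) :
    ρ (v * x) = ρ v * ρ x := by
  have hv' : ρ (star (star v) * star v) = conj (ρ (star v)) * ρ (star v) := by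
    rw [star_star, map_star_of_nonneg hρ, Complex.conj_conj, hv]
  have h := map_mul_right_of_map_star_mul_self hρ hρ1 hv' (star x)
  rw [← star_mul, map_star_of_nonneg hρ, map_star_of_nonneg hρ, map_star_of_nonneg hρ,
    ← map_mul] at h
  simpa [mul_comm] using congrArg conj h

end PositiveFunctional

theorem compatible_state_properties_general
    {C : Type*} [NormedRing C] [StarRing C] [NormedAlgebra ℂ C]
    [StarModule ℂ C]
    (D : StarSubalgebra ℂ C)
    -- `ρ` is a state on `C`
    (ρ : C →ₗ[ℂ] ℂ) (hρ1 : ρ 1 = 1) (hρpos : ∀ x : C, 0 ≤ ρ (star x * x))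
    -- `ρ` is `D`-compatible
    (hcompat : ∀ v : C, IsNormalizer (D : Set C) v →
      (((‖ρ v‖ : ℝ) : ℂ) ^ 2 = 0 ∨ ((‖ρ v‖ : ℝ) : ℂ) ^ 2 = ρ (star v * v))) :
    (∀ v : C, IsNormalizer (D : Set C) v → ρ v ≠ 0 →
      ∀ x : C, ρ (v * x) = ρ v * ρ x ∧ ρ (x * v) = ρ x * ρ v) ∧
    (∀ d₁ ∈ D, ∀ d₂ ∈ D, ρ (d₁ * d₂) = ρ d₁ * ρ d₂) ∧
    (∀ v : C, IsNormalizer (D : Set C) v → ρ v ≠ 0 →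
      ∀ x : C, ρ (star v * x * v) = ρ (star v * v) * ρ x) := by
  have hherm := map_star_of_nonneg hρpos
  have hstar_mul_self (v : C) (hv : IsNormalizer (D : Set C) v) (hv0 : ρ v ≠ 0) :
      ρ (star v * v) = conj (ρ v) * ρ v := by
    rw [Complex.conj_mul']
    exact (hcompat v hv).resolve_left (by simpa using hv0) |>.symm
  have hmul (v : C) (hv : IsNormalizer (D : Set C) v) (hv0 : ρ v ≠ 0) (x : C) :
      ρ (v * x) = ρ v * ρ x ∧ ρ (x * v) = ρ x * ρ v := by
    have hv' : ρ (v * star v) = ρ v * conj (ρ v) := by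
      simpa [hherm] using hstar_mul_self (star v) hv.star (by simpa [hherm] using hv0)
    exact ⟨map_mul_left_of_map_mul_self_star hρpos hρ1 hv' x,
      map_mul_right_of_map_star_mul_self hρpos hρ1 (hstar_mul_self v hv hv0) x⟩
  refine ⟨hmul, fun d₁ h₁ d₂ _ => ?_, fun v hv hv0 x => ?_⟩
  · by_cases h : ρ d₁ = 0
    · have h1 : ρ (d₁ + 1) ≠ 0 := by simp [h, hρ1]
      have := (hmul _ (isNormalizer_of_mem (add_mem h₁ (one_mem D))) h1 d₂).1
      simpa [add_mul, h, hρ1] using this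
    · exact (hmul d₁ (isNormalizer_of_mem h₁) h d₂).1
  · have hv0' : ρ (star v) ≠ 0 := by simpa [hherm] using hv0
    rw [(hmul v hv hv0 _).2, (hmul _ hv.star hv0' x).1, hherm, hstar_mul_self v hv hv0]
    ring

/-- Let `(C,D)` be an inclusion and `ρ` a `D`-compatible state on `C`.  Then:
(1) `ρ(vx) = ρ(v)ρ(x) = ρ(xv)` for every normalizer `v` with `ρ(v) ≠ 0` and every `x`;
(2) `ρ|_D` is multiplicative;
(3) `ρ(v* x v) = ρ(v*v) ρ(x)` for every normalizer `v` with `ρ(v) ≠ 0` and every `x`. -/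
theorem compatible_state_properties
    {C : Type*} [NormedRing C] [StarRing C] [CStarRing C] [NormedAlgebra ℂ C]
    [CompleteSpace C] [StarModule ℂ C]
    (D : StarSubalgebra ℂ C) (hDclosed : IsClosed (D : Set C))
    (hDcomm : ∀ a ∈ D, ∀ b ∈ D, a * b = b * a)
    -- `ρ` is a state on `C`
    (ρ : C →ₗ[ℂ] ℂ) (hρ1 : ρ 1 = 1) (hρpos : ∀ x : C, 0 ≤ ρ (star x * x))
    -- `ρ` is `D`-compatible
    (hcompat : ∀ v : C, IsNormalizer (D : Set C) v →
      (((‖ρ v‖ : ℝ) : ℂ) ^ 2 = 0 ∨ ((‖ρ v‖ : ℝ) : ℂ) ^ 2 = ρ (star v * v))) :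
    (∀ v : C, IsNormalizer (D : Set C) v → ρ v ≠ 0 →
      ∀ x : C, ρ (v * x) = ρ v * ρ x ∧ ρ (x * v) = ρ x * ρ v) ∧
    (∀ d₁ ∈ D, ∀ d₂ ∈ D, ρ (d₁ * d₂) = ρ d₁ * ρ d₂) ∧
    (∀ v : C, IsNormalizer (D : Set C) v → ρ v ≠ 0 →
      ∀ x : C, ρ (star v * x * v) = ρ (star v * v) * ρ x) :=
  compatible_state_properties_general D ρ hρ1 hρpos hcompat
end

section
/- Let $(C,D)$ be an inclusion such that every unitary of $C$ is a normalizer of $D$: $u^*du \in D$ and $udu^* \in D$ for every unitary $u \in C$ and $d \in D$. Then $(C,D)$ is a regular inclusion, and a state $\rho$ on $C$ is $D$-compatible if and only if $\rho$ is multiplicative, i.e., $\rho(xy) = \rho(x)\rho(y)$ for all $x, y \in C$. -/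
open scoped ComplexOrder

/-!
Unitaries are normalizers, and they span a unital C⋆-algebra; this gives regularity.

For a compatible state `ρ` and a unitary `u`, `|ρ u|` is `0` or `1`. If `ρ u = 0`, then along the
unitary path `t ↦ u exp (i t h)` (`h` self-adjoint) the continuous function `ρ (u exp (i t h))`
cannot leave `0`, so its derivative `i ρ (u h)` vanishes; hence `ρ (u x) = 0` for all `x`, and
`x = u⋆` gives `ρ 1 = 0`. So `|ρ u| = 1` for every unitary `u`. Then `u - ρ u` has length zero in
the GNS semi-inner product, so Cauchy–Schwarz gives `ρ (x u) = ρ x ρ u`, and multiplicativity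
follows by linearity since unitaries span.
-/

open Complex

theorem HasDerivAt.eq_zero_of_forall_eq_zero_or_norm_eq_one {E : Type*} [NormedAddCommGroup E]
    [NormedSpace ℝ E] {g : ℝ → E} {g' : E} {t : ℝ} (hg : HasDerivAt g g' t) (ht : g t = 0)
    (h : ∀ s, g s = 0 ∨ ‖g s‖ = 1) : g' = 0 := by
  have hsmall : ∀ᶠ s in nhds t, ‖g s‖ < 1 := by
    have := hg.continuousAt.norm
    simp only [ContinuousAt, ht, norm_zero] at this
    exact this.eventually_lt_const zero_lt_one
  have hzero : g =ᶠ[nhds t] fun _ => 0 :=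
    hsmall.mono fun s hs => (h s).resolve_right hs.ne
  exact hg.unique ((hasDerivAt_const t (0 : E)).congr_of_eventuallyEq hzero)

namespace PositiveLinearMap

def ofNonnegStarMulSelf {A : Type*} [NonUnitalRing A] [StarRing A] [PartialOrder A]
    [StarOrderedRing A] [Module ℂ A] (ρ : A →ₗ[ℂ] ℂ) (hρ : ∀ x, 0 ≤ ρ (star x * x)) :
    A →ₚ[ℂ] ℂ :=
  mk₀ ρ fun x hx => by
    rw [StarOrderedRing.nonneg_iff] at hx
    induction hx using AddSubmonoid.closure_induction with
    | mem _ hy => obtain ⟨y, rfl⟩ := hy; exact hρ y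
    | zero => simp
    | add _ _ _ _ ha hb => rw [map_add]; exact add_nonneg ha hb

section

variable {A : Type*} [NonUnitalCStarAlgebra A] [PartialOrder A] [StarOrderedRing A]
  (f : A →ₚ[ℂ] ℂ)

theorem apply_mul_eq_zero_of_apply_star_mul_self_eq_zero {y : A} (hy : f (star y * y) = 0)
    (x : A) : f (x * y) = 0 := by
  have hnorm : ‖f.toPreGNS y‖ = 0 := by
    simpa [hy] using f.preGNS_norm_sq (f.toPreGNS y)
  have := norm_inner_le_norm (𝕜 := ℂ) (f.toPreGNS (star x)) (f.toPreGNS y)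
  rw [hnorm, mul_zero, norm_le_zero_iff, preGNS_inner_def] at this
  simpa using this

end

variable {A : Type*} [CStarAlgebra A] [PartialOrder A] [StarOrderedRing A] (f : A →ₚ[ℂ] ℂ)

theorem apply_mul_unitary_of_norm_eq_one (hf : f 1 = 1) {u : A} (hu : u ∈ unitary A)
    (hfu : ‖f u‖ = 1) (x : A) : f (x * u) = f x * f u := by
  have hnormSq : star (f u) * f u = 1 := by
    rw [star_def, ← normSq_eq_conj_mul_self, normSq_eq_norm_sq, hfu]; simp
  have hw : f (star (u - f u • 1) * (u - f u • 1)) = 0 := by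
    simp only [star_sub, star_smul, star_one, sub_mul, mul_sub, smul_mul_assoc, mul_smul_comm,
      mul_one, one_mul, map_sub, map_smul, smul_eq_mul, Unitary.star_mul_self_of_mem hu, hf,
      map_star]
    linear_combination -hnormSq
  have := f.apply_mul_eq_zero_of_apply_star_mul_self_eq_zero hw x
  rw [mul_sub, mul_smul_comm, mul_one, map_sub, map_smul, smul_eq_mul] at this
  linear_combination this

theorem map_mul_of_forall_norm_apply_unitary_eq_one (hf : f 1 = 1)
    (h : ∀ u ∈ unitary A, ‖f u‖ = 1) (x y : A) : f (x * y) = f x * f y := by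
  have : (f.toLinearMap ∘ₗ LinearMap.mulLeft ℂ x) = f x • f.toLinearMap :=
    LinearMap.ext_on (CStarAlgebra.span_unitary A) fun u hu =>
      f.apply_mul_unitary_of_norm_eq_one hf hu (h u hu) x
  simpa using LinearMap.congr_fun this y

theorem apply_unitary_ne_zero (hf : f 1 = 1) (h : ∀ u ∈ unitary A, f u = 0 ∨ ‖f u‖ = 1)
    {u : A} (hu : u ∈ unitary A) : f u ≠ 0 := by
  intro hfu
  have hsa : ∀ a : selfAdjoint A, f (u * a) = 0 := by
    intro a
    have hexp : HasDerivAt (fun t : ℝ => NormedSpace.exp (t • (I • (a : A)))) (I • (a : A)) 0 := by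
      simpa using hasDerivAt_exp_smul_const (𝕂 := ℝ) (I • (a : A)) 0
    let fℝ : A →L[ℝ] ℂ := (⟨f.toLinearMap, map_continuous f⟩ : A →L[ℂ] ℂ).restrictScalars ℝ
    have hderiv : HasDerivAt (fun t : ℝ => f (u * NormedSpace.exp (t • (I • (a : A)))))
        (f (u * (I • (a : A)))) 0 :=
      fℝ.hasFDerivAt.comp_hasDerivAt 0 (hexp.const_mul u)
    have hunitary (t : ℝ) : NormedSpace.exp (t • (I • (a : A))) ∈ unitary A := by
      simpa [smul_comm I t] using (selfAdjoint.expUnitary (t • a)).2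
    have := hderiv.eq_zero_of_forall_eq_zero_or_norm_eq_one (by simpa using hfu)
      fun t => h _ (mul_mem hu (hunitary t))
    rw [mul_smul_comm, map_smul, smul_eq_mul, mul_eq_zero] at this
    exact this.resolve_left I_ne_zero
  have : f (u * star u) = 0 := by
    rw [← realPart_add_I_smul_imaginaryPart (star u), mul_add, mul_smul_comm, map_add, map_smul,
      hsa, hsa, smul_zero, add_zero]
  rw [Unitary.mul_star_self_of_mem hu, hf] at this
  exact one_ne_zero this

end PositiveLinearMap

theorem all_unitaries_normalize_general
    {C : Type*} [NormedRing C] [StarRing C] [CStarRing C] [NormedAlgebra ℂ C]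
    [CompleteSpace C] [StarModule ℂ C]
    (D : StarSubalgebra ℂ C)
    -- every unitary of `C` is a normalizer of `D`
    (hU : ∀ u : C, u ∈ unitary C → IsNormalizer (D : Set C) u) :
    -- `(C,D)` is regular
    Dense ((Submodule.span ℂ {v : C | IsNormalizer (D : Set C) v} : Submodule ℂ C) : Set C) ∧
    -- the `D`-compatible states are exactly the multiplicative states
    ∀ ρ : C →ₗ[ℂ] ℂ, ρ 1 = 1 → (∀ x : C, 0 ≤ ρ (star x * x)) →
      ((∀ v : C, IsNormalizer (D : Set C) v →
          (((‖ρ v‖ : ℝ) : ℂ) ^ 2 = 0 ∨ ((‖ρ v‖ : ℝ) : ℂ) ^ 2 = ρ (star v * v)))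
        ↔ ∀ x y : C, ρ (x * y) = ρ x * ρ y) := by
  let _ : CStarAlgebra C := { ‹NormedRing C›, ‹StarRing C›, ‹CStarRing C›, ‹CompleteSpace C›,
    ‹NormedAlgebra ℂ C›, ‹StarModule ℂ C› with }
  let _ := CStarAlgebra.spectralOrder C
  have := CStarAlgebra.spectralOrderedRing C
  have hspan : Submodule.span ℂ {v : C | IsNormalizer (D : Set C) v} = ⊤ :=
    eq_top_mono (Submodule.span_mono hU) (CStarAlgebra.span_unitary C)
  refine ⟨by simp [hspan], fun ρ hρ1 hρ => ?_⟩
  let f := PositiveLinearMap.ofNonnegStarMulSelf ρ hρ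
  constructor
  · intro hcompat
    have hdichotomy (u : C) (hu : u ∈ unitary C) : ρ u = 0 ∨ ‖ρ u‖ = 1 := by
      rcases hcompat u (hU u hu) with h | h
      · left; simpa using h
      · right
        rw [Unitary.star_mul_self_of_mem hu, hρ1] at h
        exact (pow_eq_one_iff_of_nonneg (norm_nonneg _) two_ne_zero).mp (by exact_mod_cast h)
    exact f.map_mul_of_forall_norm_apply_unitary_eq_one hρ1 fun u hu =>
      (hdichotomy u hu).resolve_left (f.apply_unitary_ne_zero hρ1 hdichotomy hu)
  · intro hmul v _
    right
    rw [hmul, show ρ (star v) = star (ρ v) from map_star f v, star_def,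
      ← normSq_eq_conj_mul_self, normSq_eq_norm_sq, ofReal_pow]

/-- Let `(C,D)` be an inclusion in which every unitary of `C` normalizes `D`.  Then `(C,D)`
is a regular inclusion, and a state `ρ` on `C` is `D`-compatible if and only if `ρ` is
multiplicative. -/
theorem all_unitaries_normalize
    {C : Type*} [NormedRing C] [StarRing C] [CStarRing C] [NormedAlgebra ℂ C]
    [CompleteSpace C] [StarModule ℂ C]
    (D : StarSubalgebra ℂ C) (hDclosed : IsClosed (D : Set C))
    (hDcomm : ∀ a ∈ D, ∀ b ∈ D, a * b = b * a)
    -- every unitary of `C` is a normalizer of `D`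
    (hU : ∀ u : C, u ∈ unitary C → IsNormalizer (D : Set C) u) :
    -- `(C,D)` is regular
    Dense ((Submodule.span ℂ {v : C | IsNormalizer (D : Set C) v} : Submodule ℂ C) : Set C) ∧
    -- the `D`-compatible states are exactly the multiplicative states
    ∀ ρ : C →ₗ[ℂ] ℂ, ρ 1 = 1 → (∀ x : C, 0 ≤ ρ (star x * x)) →
      ((∀ v : C, IsNormalizer (D : Set C) v →
          (((‖ρ v‖ : ℝ) : ℂ) ^ 2 = 0 ∨ ((‖ρ v‖ : ℝ) : ℂ) ^ 2 = ρ (star v * v)))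
        ↔ ∀ x y : C, ρ (x * y) = ρ x * ρ y) :=
  all_unitaries_normalize_general D hU
end

section
/- Let $(C,D)$ be a regular inclusion, let $(C_1, D_1)$ be a regular MASA inclusion, and let $\alpha : C \to C_1$ be a unital injective $*$-homomorphism which is regular, i.e., $\alpha(N(C,D)) \subseteq N(C_1,D_1)$. Then the relative commutant $D^c = \{x \in C : xd = dx \text{ for all } d \in D\}$ of $D$ in $C$ is commutative. -/
/-!
For a self-adjoint `w` in the relative commutant of `D`, the unitaries `exp (r • I • w)`, `r : ℝ`,
commute with `D`, hence normalize it, so the unitaries `exp (r • I • α w)` normalize `D₁`.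
Differentiating at `r = 0` the conjugates of a self-adjoint `a ∈ D₁`, which stay in the commutative
`D₁`, shows that `a` commutes with `[α w, a]`. Conjugating `α w` by the unitaries `exp (r • I • a)`
then moves it along the line `α w + r • I • [α w, a]` without changing its norm, so
`[α w, a] = 0`. Thus `α w` commutes with `D₁` and lies in it by maximality. Splitting into real and
imaginary parts, `α` maps the whole relative commutant into the commutative `D₁`, and `α` is
injective.
-/

open NormedSpace
open scoped ComplexStarModule CStarAlgebra

theorem eq_zero_of_forall_norm_add_smul_le {E : Type*} [NormedAddCommGroup E] [NormedSpace ℝ E]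
    {b c : E} {M : ℝ} (h : ∀ r : ℝ, ‖b + r • c‖ ≤ M) : c = 0 := by
  by_contra hc
  have hc_pos : 0 < ‖c‖ := norm_pos_iff.mpr hc
  set r := (|M| + ‖b‖ + 1) / ‖c‖
  have hr : ‖r • c‖ = |M| + ‖b‖ + 1 := by
    rw [norm_smul, Real.norm_of_nonneg (by positivity), div_mul_cancel₀ _ hc_pos.ne']
  have htri := norm_sub_le (b + r • c) b
  rw [add_sub_cancel_left, hr] at htri
  linarith [h r, le_abs_self M]

section ConjugationByExp

variable {𝕂 𝔸 : Type*} [RCLike 𝕂] [NormedRing 𝔸] [NormedAlgebra 𝕂 𝔸] [CompleteSpace 𝔸]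

theorem hasDerivAt_exp_neg_smul_mul_mul_exp_smul (x b : 𝔸) (t : 𝕂) :
    HasDerivAt (fun s : 𝕂 => exp (-(s • x)) * b * exp (s • x))
      (exp (-(t • x)) * (b * x - x * b) * exp (t • x)) t := by
  have h₁ : HasDerivAt (fun s : 𝕂 => exp (-(s • x))) (exp (-(t • x)) * -x) t := by
    simpa only [smul_neg] using hasDerivAt_exp_smul_const (-x) t
  exact ((h₁.mul_const b).mul (hasDerivAt_exp_smul_const' x t)).congr_deriv (by noncomm_ring)

theorem exp_neg_smul_mul_mul_exp_smul_of_commute [NormedAlgebra ℚ 𝔸] {x b : 𝔸}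
    (h : Commute x (b * x - x * b)) (t : 𝕂) :
    exp (-(t • x)) * b * exp (t • x) = b + t • (b * x - x * b) := by
  have hderiv (s : 𝕂) : HasDerivAt
      (fun s : 𝕂 => exp (-(s • x)) * b * exp (s • x) - s • (b * x - x * b)) 0 s := by
    have hc := (h.symm.smul_right s).semiconjBy.exp_neg_mul_mul_exp_eq_self
    refine ((hasDerivAt_exp_neg_smul_mul_mul_exp_smul x b s).sub
      ((hasDerivAt_id s).smul_const (b * x - x * b))).congr_deriv ?_
    rw [hc, one_smul, sub_self]
  have hconst := is_const_of_deriv_eq_zero (fun s => (hderiv s).differentiableAt)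
    (fun s => (hderiv s).deriv) t 0
  simpa [sub_eq_iff_eq_add] using hconst

end ConjugationByExp

theorem IsSelfAdjoint.commute_of_commute_commutator {A : Type*} [CStarAlgebra A] {a b : A}
    (ha : IsSelfAdjoint a) (h : Commute a (b * a - a * b)) : Commute b a := by
  let _ : NormedAlgebra ℚ A := .restrictScalars ℚ ℂ A
  set x : A := Complex.I • a
  have hx : x ∈ skewAdjoint A := ha.smul_mem_skewAdjoint Complex.conj_I
  have hcomm : b * x - x * b = Complex.I • (b * a - a * b) := by
    rw [mul_smul_comm, smul_mul_assoc, smul_sub]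
  have hxc : Commute x (b * x - x * b) := hcomm ▸ (h.smul_left _).smul_right _
  have hbound (r : ℝ) : ‖b + r • (b * x - x * b)‖ ≤ ‖b‖ := by
    have hrx := skewAdjoint.smul_mem r hx
    have hu := exp_mem_unitary_of_mem_skewAdjoint hrx
    rw [← exp_neg_smul_mul_mul_exp_smul_of_commute hxc, ← skewAdjoint.mem_iff.mp hrx, ← star_exp,
      CStarRing.norm_mul_mem_unitary _ hu, CStarRing.norm_mem_unitary_mul _ (Unitary.star_mem hu)]
  have hzero := eq_zero_of_forall_norm_add_smul_le hbound
  rw [hcomm, smul_eq_zero, sub_eq_zero] at hzero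
  exact hzero.resolve_left Complex.I_ne_zero

namespace StarSubalgebra

variable {A : Type*} [Ring A] [StarRing A] [Algebra ℂ A] [StarModule ℂ A] (S : StarSubalgebra ℂ A)

theorem realPart_mem {a : A} (ha : a ∈ S) : (ℜ a : A) ∈ S := by
  rw [realPart_apply_coe, ← algebraMap_smul ℂ]
  exact S.smul_mem (add_mem ha (star_mem ha)) _

theorem imaginaryPart_mem {a : A} (ha : a ∈ S) : (ℑ a : A) ∈ S := by
  rw [imaginaryPart_apply_coe, ← algebraMap_smul ℂ (2⁻¹ : ℝ)]
  exact S.smul_mem (S.smul_mem (sub_mem ha (star_mem ha)) _) _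

theorem mem_of_forall_isSelfAdjoint {p : Submodule ℂ A} (h : ∀ a ∈ S, IsSelfAdjoint a → a ∈ p)
    {a : A} (ha : a ∈ S) : a ∈ p := by
  rw [← realPart_add_I_smul_imaginaryPart a]
  exact p.add_mem (h _ (S.realPart_mem ha) (ℜ a).2)
    (p.smul_mem Complex.I (h _ (S.imaginaryPart_mem ha) (ℑ a).2))

end StarSubalgebra

theorem commute_of_forall_exp_conj_mem {A : Type*} [CStarAlgebra A] {D : StarSubalgebra ℂ A}
    (hD : ∀ a ∈ D, ∀ b ∈ D, a * b = b * a) {x : A}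
    (hx : ∀ r : ℝ, ∀ d ∈ D, exp (-(r • x)) * d * exp (r • x) ∈ D) {d : A} (hd : d ∈ D) :
    Commute x d := by
  suffices d ∈ Subalgebra.toSubmodule (Subalgebra.centralizer ℂ {x}) by
    simpa [Subalgebra.mem_centralizer_iff, commute_iff_eq] using this
  refine D.mem_of_forall_isSelfAdjoint (fun a haD ha => ?_) hd
  suffices Commute a (x * a - a * x) by
    simpa [Subalgebra.mem_centralizer_iff] using (ha.commute_of_commute_commutator this).eq
  have hderiv := hasDerivAt_exp_neg_smul_mul_mul_exp_smul x a (0 : ℝ)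
  simp only [zero_smul, neg_zero, exp_zero, one_mul, mul_one] at hderiv
  have hconst : HasDerivAt (fun r : ℝ => exp (-(r • x)) * a * exp (r • x) * a -
      a * (exp (-(r • x)) * a * exp (r • x))) 0 0 := by
    simp_rw [hD _ (hx _ a haD) a haD, sub_self]
    exact hasDerivAt_const _ _
  have hzero := ((hderiv.mul_const a).sub (hderiv.const_mul a)).unique hconst
  rw [← neg_sub]
  exact Commute.neg_right (sub_eq_zero.mp hzero).symm

theorem isNormalizer_of_mem_unitary {A : Type*} [Monoid A] [StarMul A] {S : Set A} {u : A}
    (hu : u ∈ unitary A) (hS : ∀ d ∈ S, Commute d u) : IsNormalizer S u := fun d hd =>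
  ⟨by rwa [mul_assoc, (hS d hd).eq, ← mul_assoc, Unitary.star_mul_self_of_mem hu, one_mul],
    by rwa [← (hS d hd).eq, mul_assoc, Unitary.mul_star_self_of_mem hu, mul_one]⟩

section RegularEmbedding

variable {C C₁ : Type*} [CStarAlgebra C] [CStarAlgebra C₁] {D : StarSubalgebra ℂ C}
  {D₁ : StarSubalgebra ℂ C₁} (α : C →⋆ₐ[ℂ] C₁)

theorem map_mem_of_isSelfAdjoint_of_commute (hD₁comm : ∀ a ∈ D₁, ∀ b ∈ D₁, a * b = b * a)
    (hmasa₁ : ∀ x : C₁, (∀ d ∈ D₁, x * d = d * x) → x ∈ D₁)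
    (hαreg : ∀ v : C, IsNormalizer (D : Set C) v → IsNormalizer (D₁ : Set C₁) (α v))
    {w : C} (hw : IsSelfAdjoint w) (hwD : ∀ d ∈ D, Commute d w) : α w ∈ D₁ := by
  let _ : NormedAlgebra ℚ C := .restrictScalars ℚ ℂ C
  let _ : NormedAlgebra ℚ C₁ := .restrictScalars ℚ ℂ C₁
  have hx : Complex.I • w ∈ skewAdjoint C := hw.smul_mem_skewAdjoint Complex.conj_I
  have hconj (r : ℝ) : ∀ d ∈ D₁,
      exp (-(r • α (Complex.I • w))) * d * exp (r • α (Complex.I • w)) ∈ D₁ := by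
    have hnorm : IsNormalizer (D : Set C) (exp (r • Complex.I • w)) :=
      isNormalizer_of_mem_unitary (exp_mem_unitary_of_mem_skewAdjoint (skewAdjoint.smul_mem r hx))
        fun d hd => (((hwD d hd).smul_right Complex.I).smul_right r).exp_right
    intro d hd
    simpa [map_exp α (map_continuous α), star_exp, ← map_star, map_real_smul α (map_continuous α),
      hw.star_eq] using (hαreg _ hnorm d hd).1
  have hxD₁ := hmasa₁ _ fun d hd => (commute_of_forall_exp_conj_mem hD₁comm hconj hd).eq
  simpa [smul_smul] using D₁.smul_mem hxD₁ (-Complex.I)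

theorem centralizer_le_comap_of_regular (hD₁comm : ∀ a ∈ D₁, ∀ b ∈ D₁, a * b = b * a)
    (hmasa₁ : ∀ x : C₁, (∀ d ∈ D₁, x * d = d * x) → x ∈ D₁)
    (hαreg : ∀ v : C, IsNormalizer (D : Set C) v → IsNormalizer (D₁ : Set C₁) (α v)) :
    StarSubalgebra.centralizer ℂ (D : Set C) ≤ D₁.comap α := fun _ hw =>
  (StarSubalgebra.centralizer ℂ (D : Set C)).mem_of_forall_isSelfAdjoint
    (p := Subalgebra.toSubmodule (D₁.comap α).toSubalgebra)
    (fun _ ha hsa => map_mem_of_isSelfAdjoint_of_commute α hD₁comm hmasa₁ hαreg hsa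
      fun d hd => ((StarSubalgebra.mem_centralizer_iff ℂ).mp ha d hd).1) hw

end RegularEmbedding

theorem regular_embedding_into_masa_gives_abelian_commutant_general
    {C : Type*} [CStarAlgebra C] {C₁ : Type*} [CStarAlgebra C₁]
    (D : StarSubalgebra ℂ C)
    (D₁ : StarSubalgebra ℂ C₁)
    (hD₁comm : ∀ a ∈ D₁, ∀ b ∈ D₁, a * b = b * a)
    -- `D₁` is a MASA in `C₁`
    (hmasa₁ : ∀ x : C₁, (∀ d ∈ D₁, x * d = d * x) → x ∈ D₁)
    -- `α` is a unital injective `*`-homomorphism mapping normalizers to normalizers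
    (α : C →⋆ₐ[ℂ] C₁) (hαinj : Function.Injective α)
    (hαreg : ∀ v : C, IsNormalizer (D : Set C) v → IsNormalizer (D₁ : Set C₁) (α v)) :
    ∀ x ∈ {x : C | ∀ d ∈ D, x * d = d * x},
      ∀ y ∈ {x : C | ∀ d ∈ D, x * d = d * x}, x * y = y * x := by
  have hmap {z : C} (hz : ∀ d ∈ D, z * d = d * z) : α z ∈ D₁ :=
    centralizer_le_comap_of_regular α hD₁comm hmasa₁ hαreg <|
      (StarSubalgebra.mem_centralizer_iff ℂ).mpr fun d hd =>
        ⟨(hz d hd).symm, (hz _ (star_mem hd)).symm⟩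
  intro x hx y hy
  apply hαinj
  simpa only [map_mul] using hD₁comm _ (hmap hx) _ (hmap hy)

/-- Let `(C,D)` be a regular inclusion, `(C₁,D₁)` a regular MASA inclusion, and
`α : C → C₁` a unital injective `*`-homomorphism which is regular
(`α(N(C,D)) ⊆ N(C₁,D₁)`).  Then the relative commutant of `D` in `C` is commutative. -/
theorem regular_embedding_into_masa_gives_abelian_commutant
    {C : Type*} [CStarAlgebra C] {C₁ : Type*} [CStarAlgebra C₁]
    (D : StarSubalgebra ℂ C) (hDclosed : IsClosed (D : Set C))
    (hDcomm : ∀ a ∈ D, ∀ b ∈ D, a * b = b * a)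
    -- `(C,D)` is regular
    (hreg : Dense
      ((Submodule.span ℂ {v : C | IsNormalizer (D : Set C) v} : Submodule ℂ C) : Set C))
    (D₁ : StarSubalgebra ℂ C₁) (hD₁closed : IsClosed (D₁ : Set C₁))
    (hD₁comm : ∀ a ∈ D₁, ∀ b ∈ D₁, a * b = b * a)
    -- `D₁` is a MASA in `C₁`
    (hmasa₁ : ∀ x : C₁, (∀ d ∈ D₁, x * d = d * x) → x ∈ D₁)
    -- `(C₁,D₁)` is regular
    (hreg₁ : Dense
      ((Submodule.span ℂ {v : C₁ | IsNormalizer (D₁ : Set C₁) v} : Submodule ℂ C₁) : Set C₁))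
    -- `α` is a unital injective `*`-homomorphism mapping normalizers to normalizers
    (α : C →⋆ₐ[ℂ] C₁) (hαinj : Function.Injective α)
    (hαreg : ∀ v : C, IsNormalizer (D : Set C) v → IsNormalizer (D₁ : Set C₁) (α v)) :
    ∀ x ∈ {x : C | ∀ d ∈ D, x * d = d * x},
      ∀ y ∈ {x : C | ∀ d ∈ D, x * d = d * x}, x * y = y * x :=
  regular_embedding_into_masa_gives_abelian_commutant_general D D₁ hD₁comm hmasa₁ α hαinj hαreg
end

section
/- Let $G$ be a group and let $f : G \to \mathbb{C}$ be a positive-definite function (for every $n$ and every $g_1, \dots, g_n \in G$, the $n \times n$ matrix $\big(f(g_i^{-1} g_j)\big)_{i,j}$ is positive semidefinite) such that $f(1) = 1$ and $|f(g)| \in \{0, 1\}$ for every $g \in G$. Let $H := \{g \in G : f(g) \neq 0\}$. Then: (a) $f(g_1 g_2) = f(g_1) f(g_2)$ whenever $g_1 \in H$ or $g_2 \in H$; and (b) $H$ is a subgroup of $G$ and the restriction of $f$ to $H$ is a group homomorphism from $H$ into the circle group $\{z \in \mathbb{C} : |z| = 1\}$. -/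
open scoped ComplexOrder ComplexConjugate Matrix

def IsPosDefFun {G : Type*} [Group G] (f : G → ℂ) : Prop :=
  ∀ (n : ℕ) (g : Fin n → G), (Matrix.of fun i j => f ((g i)⁻¹ * g j)).PosSemidef

namespace IsPosDefFun

variable {G : Type*} [Group G] {f : G → ℂ}

theorem map_inv (hf : IsPosDefFun f) (g : G) : f g⁻¹ = conj (f g) := by
  simpa using ((hf 2 ![1, g]).1.apply 1 0).symm

/- The tuple `(1, a b, a)`: the vector `(0, 1, -f b)` is isotropic for its Gram matrix because
`‖f b‖ = 1`, hence lies in its kernel, and row `0` of the kernel equation reads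
`f (a b) - f a * f b = 0`. -/
theorem map_mul_of_norm_eq_one_right (hf : IsPosDefFun f) (hf1 : f 1 = 1) (a : G) {b : G}
    (hb : ‖f b‖ = 1) : f (a * b) = f a * f b := by
  set M := Matrix.of fun i j => f ((![1, a * b, a] i)⁻¹ * ![1, a * b, a] j)
  set v : Fin 3 → ℂ := ![0, 1, -f b]
  have hb' : conj (f b) * f b = 1 := by
    rw [Complex.conj_mul', hb]; norm_num
  have hisotropic : star v ⬝ᵥ M *ᵥ v = 0 := by
    simp [M, v, dotProduct, Matrix.mulVec, Fin.sum_univ_three, hf1, hf.map_inv, mul_assoc, hb']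
  have hkernel : M *ᵥ v = 0 := (hf 3 _).dotProduct_mulVec_zero_iff v |>.mp hisotropic
  simpa [M, v, dotProduct, Matrix.mulVec, Fin.sum_univ_three, ← sub_eq_add_neg, sub_eq_zero]
    using congrFun hkernel 0

theorem map_mul_of_norm_eq_one_left (hf : IsPosDefFun f) (hf1 : f 1 = 1) {a : G} (b : G)
    (ha : ‖f a‖ = 1) : f (a * b) = f a * f b := by
  have ha' : ‖f a⁻¹‖ = 1 := by rw [hf.map_inv, Complex.norm_conj, ha]
  have h := congrArg conj (hf.map_mul_of_norm_eq_one_right hf1 b⁻¹ ha')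
  rwa [← mul_inv_rev, hf.map_inv, hf.map_inv, hf.map_inv, map_mul, Complex.conj_conj,
    Complex.conj_conj, Complex.conj_conj, mul_comm (f b)] at h

end IsPosDefFun

/-- Let `G` be a group and `f : G → ℂ` a positive-definite function with `f 1 = 1` and
`|f g| ∈ {0,1}` for all `g` (a pre-homomorphism).  With `H = {g : f g ≠ 0}`:
(a) `f (g₁ g₂) = f g₁ * f g₂` whenever `g₁ ∈ H` or `g₂ ∈ H`; and
(b) `H` is a subgroup of `G` and `f|_H` is a group homomorphism into the circle group. -/
theorem prehomomorphism_supporting_subgroup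
    {G : Type*} [Group G] (f : G → ℂ)
    -- `f` is positive definite
    (hpd : ∀ (n : ℕ) (g : Fin n → G),
      (Matrix.of fun i j => f ((g i)⁻¹ * g j)).PosSemidef)
    (hf1 : f 1 = 1)
    (habs : ∀ g : G, ‖f g‖ = 0 ∨ ‖f g‖ = 1) :
    -- (a)
    (∀ g₁ g₂ : G, (f g₁ ≠ 0 ∨ f g₂ ≠ 0) → f (g₁ * g₂) = f g₁ * f g₂) ∧
    -- (b): `H = {g : f g ≠ 0}` is a subgroup and `f|_H` maps into the unit circle
    ((1 : G) ∈ {g : G | f g ≠ 0} ∧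
      (∀ g ∈ {g : G | f g ≠ 0}, g⁻¹ ∈ {g : G | f g ≠ 0}) ∧
      (∀ g ∈ {g : G | f g ≠ 0}, ∀ h ∈ {g : G | f g ≠ 0}, g * h ∈ {g : G | f g ≠ 0}) ∧
      (∀ g ∈ {g : G | f g ≠ 0}, ‖f g‖ = 1) ∧
      (∀ g ∈ {g : G | f g ≠ 0}, ∀ h ∈ {g : G | f g ≠ 0}, f (g * h) = f g * f h)) := by
  have hf : IsPosDefFun f := hpd
  have hnorm {g : G} (hg : f g ≠ 0) : ‖f g‖ = 1 := (habs g).resolve_left (norm_ne_zero_iff.mpr hg)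
  have hmul (g₁ g₂ : G) (h : f g₁ ≠ 0 ∨ f g₂ ≠ 0) : f (g₁ * g₂) = f g₁ * f g₂ :=
    h.elim (fun h₁ => hf.map_mul_of_norm_eq_one_left hf1 g₂ (hnorm h₁))
      (fun h₂ => hf.map_mul_of_norm_eq_one_right hf1 g₁ (hnorm h₂))
  refine ⟨hmul, by simp [hf1], fun g hg => ?_, fun g hg h hh => ?_, fun g hg => hnorm hg,
    fun g hg h _ => hmul g h (.inl hg)⟩
  · simpa [hf.map_inv] using hg
  · simpa [hmul g h (.inl hg)] using ⟨hg, hh⟩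
end
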